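/- Let A be a positive conjunctive TABG, let r be a run of A, and let r' be a global pumping on r with indexes 1 ≤ j < i ≤ height(r) and pump-injection I. Then r' is a run of A (it satisfies all brother constraints and all global constraints of A), and height(r') < height(r). -/

import Mathlib

set_option maxHeartbeats 1000000

namespace TreeAut

/-! ### Ranked terms -/

/-- Ranked terms over a symbol type `F` (arities are imposed by well-formedness). -/
inductive RTerm (F : Type) : Type
  | node : F → List (RTerm F) → RTerm F

namespace RTerm

def rootLabel {F : Type} : RTerm F → F
  | .node f _ => f

/-- `SubAt t p s` : the subterm of `t` at position `p` is `s`. -/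
inductive SubAt {F : Type} : RTerm F → List ℕ → RTerm F → Prop
  | refl (t : RTerm F) : SubAt t [] t
  | step {f : F} {ts : List (RTerm F)} {i : ℕ} {u s : RTerm F} {p : List ℕ} :
      ts[i]? = some u → SubAt u p s → SubAt (RTerm.node f ts) (i :: p) s

/-- `p` is a position of `t`. -/
def IsPos {F : Type} (t : RTerm F) (p : List ℕ) : Prop := ∃ s, SubAt t p s

/-- `ReplAt t p s t'` : `t'` is the result of replacing in `t` the subterm at `p` by `s`. -/
inductive ReplAt {F : Type} : RTerm F → List ℕ → RTerm F → RTerm F → Prop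
  | here (t s : RTerm F) : ReplAt t [] s s
  | step {f : F} {ts : List (RTerm F)} {i : ℕ} {u u' s : RTerm F} {p : List ℕ} :
      ts[i]? = some u → ReplAt u p s u' →
      ReplAt (RTerm.node f ts) (i :: p) s (RTerm.node f (ts.set i u'))

/-- Height of a term: the maximal length of a position. -/
def height {F : Type} : RTerm F → ℕ
  | .node _ [] => 0
  | .node f (t :: ts) => max (height t + 1) (height (RTerm.node f ts))

/-- Well-formedness of a term with respect to an arity function. -/
inductive WF {F : Type} (ar : F → ℕ) : RTerm F → Prop
  | node {f : F} {ts : List (RTerm F)} :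
      ts.length = ar f → (∀ u ∈ ts, WF ar u) → WF ar (RTerm.node f ts)

/-- A constant, i.e. a term reduced to a symbol (of arity 0). -/
def IsConst {F : Type} (t : RTerm F) : Prop := ∃ c : F, t = RTerm.node c []

/-- Relabeling of a term. -/
def map {F G : Type} (g : F → G) : RTerm F → RTerm G
  | .node f ts => RTerm.node (g f) (ts.attach.map (fun u => map g u.1))
decreasing_by
  simp only [RTerm.node.sizeOf_spec]
  have := List.sizeOf_lt_of_mem u.2
  omega

end RTerm

/-! ### Patterns (terms with variables) and flat equational theories -/

/-- Terms with variables (variables are natural numbers). -/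
inductive Pat (F : Type) : Type
  | var : ℕ → Pat F
  | node : F → List (Pat F) → Pat F

namespace Pat

def subst {F : Type} (σ : ℕ → RTerm F) : Pat F → RTerm F
  | .var v => σ v
  | .node f ps => RTerm.node f (ps.attach.map (fun p => subst σ p.1))
decreasing_by
  simp only [Pat.node.sizeOf_spec]
  have := List.sizeOf_lt_of_mem p.2
  omega

def height {F : Type} : Pat F → ℕ
  | .var _ => 0
  | .node _ [] => 0
  | .node f (p :: ps) => max (height p + 1) (height (Pat.node f ps))

inductive HasVar {F : Type} (v : ℕ) : Pat F → Prop
  | var : HasVar v (Pat.var v)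
  | node {f : F} {ps : List (Pat F)} {p : Pat F} :
      p ∈ ps → HasVar v p → HasVar v (Pat.node f ps)

inductive WF {F : Type} (ar : F → ℕ) : Pat F → Prop
  | var (v : ℕ) : WF ar (Pat.var v)
  | node {f : F} {ps : List (Pat F)} :
      ps.length = ar f → (∀ p ∈ ps, WF ar p) → WF ar (Pat.node f ps)

end Pat

/-- A flat equation: both sides well-formed, of the same height which is at most 1,
and with the same variables. -/
def IsFlatEq {F : Type} (ar : F → ℕ) (e : Pat F × Pat F) : Prop :=
  e.1.WF ar ∧ e.2.WF ar ∧ e.1.height = e.2.height ∧ e.1.height ≤ 1 ∧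
  (∀ v : ℕ, Pat.HasVar v e.1 ↔ Pat.HasVar v e.2)

/-- One rewrite step using an equation of `E` (in either direction) at some position. -/
def Rew {F : Type} (E : List (Pat F × Pat F)) (s t : RTerm F) : Prop :=
  ∃ l r : Pat F, ((l, r) ∈ E ∨ (r, l) ∈ E) ∧
    ∃ (σ : ℕ → RTerm F) (p : List ℕ),
      RTerm.SubAt s p (l.subst σ) ∧ RTerm.ReplAt s p (r.subst σ) t

/-- Equivalence modulo the set of equations `E`. -/
def EqE {F : Type} (E : List (Pat F × Pat F)) : RTerm F → RTerm F → Prop :=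
  Relation.ReflTransGen (Rew E)

/-! ### Global constraints -/

/-- Transition rule of a tree automaton with constraints between brothers:
`sym(args) → res` with brother equalities `bcEq` and disequalities `bcNeq`
(1-based indices of children). -/
structure Rule (F Q : Type) where
  sym : F
  args : List Q
  bcEq : List (ℕ × ℕ)
  bcNeq : List (ℕ × ℕ)
  res : Q

/-- Atomic global constraints: `q ≈ q'`, `q ≉ q'`, and linear inequalities
`Σ c·|q| ≥ a` (type `|.|`) and `Σ c·‖q‖ ≥ a` (type `‖.‖`). -/
inductive GAtom (Q : Type) : Type
  | eq : Q → Q → GAtom Q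
  | neq : Q → Q → GAtom Q
  | cnt : List (ℤ × Q) → ℤ → GAtom Q
  | cls : List (ℤ × Q) → ℤ → GAtom Q

/-- Boolean combinations of atomic global constraints. -/
inductive GC (Q : Type) : Type
  | tt : GC Q
  | ff : GC Q
  | atom : GAtom Q → GC Q
  | and : GC Q → GC Q → GC Q
  | or : GC Q → GC Q → GC Q
  | not : GC Q → GC Q

/-- The set of `=E`-equivalence classes of members of a set of terms. -/
def classesOf {F : Type} (E : List (Pat F × Pat F)) (S : Set (RTerm F)) :
    Set (Set (RTerm F)) :=
  {C | ∃ t ∈ S, C = {u | EqE E t u}}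

section Sat

variable {β F Q : Type}

/-- Positions of a (run) tree where the node has state `q`
(`st` extracts the state of a node label). -/
def stPos (st : β → Q) (r : RTerm β) (q : Q) : Set (List ℕ) :=
  {p | ∃ s, RTerm.SubAt r p s ∧ st s.rootLabel = q}

/-- `⟦|q|⟧` : the number of positions with state `q`. -/
noncomputable def stCount (st : β → Q) (r : RTerm β) (q : Q) : ℕ :=
  (stPos st r q).ncard

/-- Terms occurring below positions with state `q`. -/
def stTerms (st : β → Q) (sy : β → F) (r : RTerm β) (q : Q) : Set (RTerm F) :=
  {t | ∃ p s, RTerm.SubAt r p s ∧ st s.rootLabel = q ∧ s.map sy = t}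

/-- `⟦‖q‖⟧` : the number of `=E`-classes of terms at positions with state `q`. -/
noncomputable def clsCount (E : List (Pat F × Pat F)) (st : β → Q) (sy : β → F)
    (r : RTerm β) (q : Q) : ℕ :=
  (classesOf E (stTerms st sy r q)).ncard

/-- Satisfaction of a global atomic constraint by a run tree. -/
def satAtom (E : List (Pat F × Pat F)) (st : β → Q) (sy : β → F) (r : RTerm β) :
    GAtom Q → Prop
  | .eq q q' => ∀ p p' s s', p ≠ p' → RTerm.SubAt r p s → RTerm.SubAt r p' s' →
      st s.rootLabel = q → st s'.rootLabel = q' → EqE E (s.map sy) (s'.map sy)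
  | .neq q q' => ∀ p p' s s', p ≠ p' → RTerm.SubAt r p s → RTerm.SubAt r p' s' →
      st s.rootLabel = q → st s'.rootLabel = q' → ¬ EqE E (s.map sy) (s'.map sy)
  | .cnt l a => a ≤ (l.map (fun cq => cq.1 * (stCount st r cq.2 : ℤ))).sum
  | .cls l a => a ≤ (l.map (fun cq => cq.1 * (clsCount E st sy r cq.2 : ℤ))).sum

/-- Satisfaction of a global constraint by a run tree. -/
def satGC (E : List (Pat F × Pat F)) (st : β → Q) (sy : β → F) (r : RTerm β) :
    GC Q → Prop
  | .tt => True
  | .ff => False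
  | .atom a => satAtom E st sy r a
  | .and c d => satGC E st sy r c ∧ satGC E st sy r d
  | .or c d => satGC E st sy r c ∨ satGC E st sy r d
  | .not c => ¬ satGC E st sy r c

end Sat

/-! ### Tree automata with global and brother constraints modulo a flat theory -/

/-- A run is represented as a tree labeled by the rules applied at each position. -/
abbrev Run (F Q : Type) := RTerm (Rule F Q)

def Run.state {F Q : Type} (r : Run F Q) : Q := (RTerm.rootLabel r).res
def Run.term {F Q : Type} (r : Run F Q) : RTerm F := r.map Rule.sym

/-- `r` is a structurally correct run using rules of `Δ`, whose local brother
constraints are satisfied modulo `E`. -/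
inductive IsRun {F Q : Type} (Δ : List (Rule F Q)) (E : List (Pat F × Pat F)) :
    Run F Q → Prop
  | node {ρ : Rule F Q} {rs : List (Run F Q)} :
      ρ ∈ Δ →
      ρ.args = rs.map Run.state →
      (∀ r ∈ rs, IsRun Δ E r) →
      (∀ i j ri rj, (i, j) ∈ ρ.bcEq → rs[i - 1]? = some ri →
        rs[j - 1]? = some rj → EqE E ri.term rj.term) →
      (∀ i j ri rj, (i, j) ∈ ρ.bcNeq → rs[i - 1]? = some ri →
        rs[j - 1]? = some rj → ¬ EqE E ri.term rj.term) →
      IsRun Δ E (RTerm.node ρ rs)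

/-- Tree automaton with brother constraints and global constraints modulo a flat theory. -/
structure TABG (F Q : Type) where
  arity : F → ℕ
  stQ : Finset Q
  rules : List (Rule F Q)
  final : List Q
  eqs : List (Pat F × Pat F)
  gc : GC Q

def TABG.IsAccRun {F Q : Type} (A : TABG F Q) (r : Run F Q) : Prop :=
  IsRun A.rules A.eqs r ∧ satGC A.eqs Rule.res Rule.sym r A.gc ∧ r.state ∈ A.final

def TABG.Lang {F Q : Type} (A : TABG F Q) : Set (RTerm F) :=
  {t | ∃ r : Run F Q, A.IsAccRun r ∧ r.term = t}

def Rule.WFr {F Q : Type} (ar : F → ℕ) (S : Finset Q) (ρ : Rule F Q) : Prop :=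
  ρ.args.length = ar ρ.sym ∧ ρ.res ∈ S ∧ (∀ q ∈ ρ.args, q ∈ S) ∧
  (∀ ij ∈ ρ.bcEq, 1 ≤ ij.1 ∧ ij.1 ≤ ρ.args.length ∧ 1 ≤ ij.2 ∧ ij.2 ≤ ρ.args.length) ∧
  (∀ ij ∈ ρ.bcNeq, 1 ≤ ij.1 ∧ ij.1 ≤ ρ.args.length ∧ 1 ≤ ij.2 ∧ ij.2 ≤ ρ.args.length)

/-- Well-formedness of a TABG: the equational theory is flat, the rules respect
the arities and the state set, and final states belong to the state set. -/
def TABG.WF {F Q : Type} (A : TABG F Q) : Prop :=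
  (∀ e ∈ A.eqs, IsFlatEq A.arity e) ∧
  (∀ ρ ∈ A.rules, ρ.WFr A.arity A.stQ) ∧
  (∀ q ∈ A.final, q ∈ A.stQ)

/-! ### Classes of constraints -/

def GAtom.IsEqNeq {Q : Type} : GAtom Q → Prop
  | .eq _ _ => True
  | .neq _ _ => True
  | .cnt _ _ => False
  | .cls _ _ => False

/-- All coefficients and the constant have the same sign. -/
def sameSign (l : List ℤ) (a : ℤ) : Prop :=
  ((∀ c ∈ l, 0 ≤ c) ∧ 0 ≤ a) ∨ ((∀ c ∈ l, c ≤ 0) ∧ a ≤ 0)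

/-- eq/neq atoms and *natural* linear inequalities. -/
def GAtom.IsNat {Q : Type} : GAtom Q → Prop
  | .eq _ _ => True
  | .neq _ _ => True
  | .cnt l a => sameSign (l.map Prod.fst) a
  | .cls l a => sameSign (l.map Prod.fst) a

/-- eq/neq atoms and natural linear inequalities over the `|q|` only. -/
def GAtom.IsNatCnt {Q : Type} : GAtom Q → Prop
  | .eq _ _ => True
  | .neq _ _ => True
  | .cnt l a => sameSign (l.map Prod.fst) a
  | .cls _ _ => False

def GC.AtomsAre {Q : Type} (P : GAtom Q → Prop) : GC Q → Prop
  | .tt => True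
  | .ff => True
  | .atom a => P a
  | .and c d => GC.AtomsAre P c ∧ GC.AtomsAre P d
  | .or c d => GC.AtomsAre P c ∧ GC.AtomsAre P d
  | .not c => GC.AtomsAre P c

/-- Positive conjunctive constraint: a conjunction of atoms. -/
def GC.IsConjAtoms {Q : Type} : GC Q → Prop
  | .tt => True
  | .ff => False
  | .atom _ => True
  | .and c d => GC.IsConjAtoms c ∧ GC.IsConjAtoms d
  | .or _ _ => False
  | .not _ => False

/-- A literal: an atom (with natural arithmetic atoms) or the negation of an
eq/neq atom. -/
def GC.IsLit {Q : Type} : GC Q → Prop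
  | .atom a => GAtom.IsNat a
  | .not (.atom (.eq _ _)) => True
  | .not (.atom (.neq _ _)) => True
  | _ => False

def GC.IsConjLit {Q : Type} : GC Q → Prop
  | .and c d => GC.IsConjLit c ∧ GC.IsConjLit d
  | c => GC.IsLit c

def GC.IsDNF {Q : Type} : GC Q → Prop
  | .or c d => GC.IsDNF c ∧ GC.IsDNF d
  | c => GC.IsConjLit c

/-- Normalized constraint: `true`, `false`, or a disjunction of conjunctions of
literals in which all arithmetic literals are positive. -/
def GC.Normalized {Q : Type} (c : GC Q) : Prop :=
  c = GC.tt ∨ c = GC.ff ∨ GC.IsDNF c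

/-- No reflexive disequality constraints (the TAGED restriction). -/
def GC.NoReflNeq {Q : Type} : GC Q → Prop :=
  GC.AtomsAre (fun a => match a with
    | .neq q q' => q ≠ q'
    | _ => True)

def conjList {Q : Type} : List (GC Q) → GC Q
  | [] => GC.tt
  | [c] => c
  | c :: cs => GC.and c (conjList cs)

def disjList {Q : Type} : List (GC Q) → GC Q
  | [] => GC.ff
  | [c] => c
  | c :: cs => GC.or c (disjList cs)

/-- No local constraints between brothers. -/
def TABG.NoBrother {F Q : Type} (A : TABG F Q) : Prop :=
  ∀ ρ ∈ A.rules, ρ.bcEq = [] ∧ ρ.bcNeq = []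

/-- A TAG: empty equational theory and no brother constraints. -/
def TABG.IsTAG {F Q : Type} (A : TABG F Q) : Prop := A.eqs = [] ∧ A.NoBrother

/-- A plain tree automaton: a TAG with trivial global constraint. -/
def TABG.IsTA {F Q : Type} (A : TABG F Q) : Prop := A.IsTAG ∧ A.gc = GC.tt

/-! ### Synonym states -/

section Syn

variable {F Q : Type} [DecidableEq Q]

/-- Possible replacements of a state occurrence: `q̄` may stay or become `q̂`. -/
def replS (qb qh q : Q) : List Q := if q = qb then [qb, qh] else [q]

/-- Replacement of every occurrence of `|q̄|` (resp. `‖q̄‖`) by `|q̄| + |q̂|`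
(resp. `‖q̄‖ + ‖q̂‖`) in a linear expression. -/
def linRepl (qb qh : Q) (l : List (ℤ × Q)) : List (ℤ × Q) :=
  l.flatMap (fun cq => (replS qb qh cq.2).map (fun q' => (cq.1, q')))

/-- Literal transformation on positive atoms. -/
def synAtom (qb qh : Q) : GAtom Q → GC Q
  | .eq q1 q2 => conjList ((replS qb qh q1).flatMap (fun a =>
      (replS qb qh q2).map (fun b => GC.atom (GAtom.eq a b))))
  | .neq q1 q2 => conjList ((replS qb qh q1).flatMap (fun a =>
      (replS qb qh q2).map (fun b => GC.atom (GAtom.neq a b))))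
  | .cnt l a => GC.atom (GAtom.cnt (linRepl qb qh l) a)
  | .cls l a => GC.atom (GAtom.cls (linRepl qb qh l) a)

/-- The literal transformation `Ĉ` of (a normalized) constraint, for `q̄ ↝ q̂`. -/
def GC.synTrans (qb qh : Q) : GC Q → GC Q
  | .tt => .tt
  | .ff => .ff
  | .atom a => synAtom qb qh a
  | .not (.atom (.eq q1 q2)) => disjList ((replS qb qh q1).flatMap (fun a =>
      (replS qb qh q2).map (fun b => GC.not (GC.atom (GAtom.eq a b)))))
  | .not (.atom (.neq q1 q2)) => disjList ((replS qb qh q1).flatMap (fun a =>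
      (replS qb qh q2).map (fun b => GC.not (GC.atom (GAtom.neq a b)))))
  | .not c => GC.not (GC.synTrans qb qh c)
  | .and c d => GC.and (GC.synTrans qb qh c) (GC.synTrans qb qh d)
  | .or c d => GC.or (GC.synTrans qb qh c) (GC.synTrans qb qh d)

/-- All rules obtained from `ρ` by all possible replacements of occurrences of
`q̄` by `q̂`. -/
def Rule.synVars (qb qh : Q) (ρ : Rule F Q) : List (Rule F Q) :=
  (ρ.args.mapM (replS qb qh)).flatMap (fun args' =>
    (replS qb qh ρ.res).map (fun res' =>
      { sym := ρ.sym, args := args', bcEq := ρ.bcEq, bcNeq := ρ.bcNeq, res := res' }))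

/-- `F_{q̄↝q̂}` on the list of final states. -/
def finSyn (qb qh : Q) (l : List Q) : List Q := if qb ∈ l then qh :: l else l

/-- The constraint `‖q‖ = k`. -/
def clsEqC (q : Q) (k : ℤ) : GC Q :=
  GC.and (GC.atom (GAtom.cls [(1, q)] k)) (GC.atom (GAtom.cls [(-1, q)] (-k)))

/-- The automaton `A_{q̄↝q̂}`. -/
def TABG.synonym (A : TABG F Q) (qb qh : Q) : TABG F Q :=
  { arity := A.arity
    stQ := insert qh A.stQ
    rules := A.rules.flatMap (Rule.synVars qb qh)
    final := finSyn qb qh A.final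
    eqs := A.eqs
    gc := GC.and
      (GC.or (GC.and (clsEqC qb 0) (clsEqC qh 0))
             (GC.and (clsEqC qh 1) (GC.atom (GAtom.neq qb qh))))
      (GC.synTrans qb qh A.gc) }

end Syn

/-! ### Removal of the counting constraints `|q|` : the automaton `A_¬ℕ` -/

def GC.cntAtoms {Q : Type} : GC Q → List (List (ℤ × Q) × ℤ)
  | .atom (.cnt l a) => [(l, a)]
  | .and c d => GC.cntAtoms c ++ GC.cntAtoms d
  | .or c d => GC.cntAtoms c ++ GC.cntAtoms d
  | .not c => GC.cntAtoms c
  | _ => []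

def GC.eqAtoms {Q : Type} : GC Q → List (Q × Q)
  | .atom (.eq q q') => [(q, q')]
  | .and c d => GC.eqAtoms c ++ GC.eqAtoms d
  | .or c d => GC.eqAtoms c ++ GC.eqAtoms d
  | .not c => GC.eqAtoms c
  | _ => []

def GC.neqAtoms {Q : Type} : GC Q → List (Q × Q)
  | .atom (.neq q q') => [(q, q')]
  | .and c d => GC.neqAtoms c ++ GC.neqAtoms d
  | .or c d => GC.neqAtoms c ++ GC.neqAtoms d
  | .not c => GC.neqAtoms c
  | _ => []

/-- `max_A` : one plus the maximal constant occurring in the counting literals. -/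
def GC.maxConst {Q : Type} (c : GC Q) : ℕ :=
  1 + ((c.cntAtoms.map (fun la => la.2.natAbs)).foldr max 0)

/-- Truncated sum of two mappings `Q → {0,…,m}`. -/
def msumF {Q : Type} {m : ℕ} (M1 M2 : Q → Fin (m + 1)) : Q → Fin (m + 1) :=
  fun q => ⟨min ((M1 q : ℕ) + (M2 q : ℕ)) m, Nat.lt_succ_of_le (Nat.min_le_right _ _)⟩

/-- The mapping `M_q`. -/
def unitMap {Q : Type} [DecidableEq Q] (m : ℕ) (q : Q) : Q → Fin (m + 1) :=
  fun q' => if q' = q then ⟨min 1 m, Nat.lt_succ_of_le (Nat.min_le_right _ _)⟩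
            else ⟨0, Nat.succ_pos m⟩

/-- Value of a linear expression under a mapping. -/
def lvalF {Q : Type} {m : ℕ} (M : Q → Fin (m + 1)) (l : List (ℤ × Q)) : ℤ :=
  (l.map (fun cq => cq.1 * ((M cq.2 : ℕ) : ℤ))).sum

/-- All variants of a rule, decorated with occurrence-counting mappings. -/
noncomputable def Rule.notNVars {F Q : Type} [Fintype Q] [DecidableEq Q] (m : ℕ) (ρ : Rule F Q) :
    List (Rule F (Q × (Q → Fin (m + 1)))) :=
  ((ρ.args.mapM (fun q =>
      ((Finset.univ : Finset (Q → Fin (m + 1))).toList).map (fun M => (q, M))))).map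
    (fun args' =>
      { sym := ρ.sym, args := args', bcEq := ρ.bcEq, bcNeq := ρ.bcNeq,
        res := (ρ.res, (args'.map Prod.snd).foldr msumF (unitMap m ρ.res)) })

/-- The automaton `A_¬ℕ`. -/
noncomputable def TABG.notN {F Q : Type} [Fintype Q] [DecidableEq Q] (A : TABG F Q) :
    TABG F (Q × (Q → Fin (A.gc.maxConst + 1))) :=
  { arity := A.arity
    stQ := A.stQ ×ˢ (Finset.univ : Finset (Q → Fin (A.gc.maxConst + 1)))
    rules := A.rules.flatMap (Rule.notNVars A.gc.maxConst)
    final := (A.final.flatMap (fun q =>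
        ((Finset.univ : Finset (Q → Fin (A.gc.maxConst + 1))).toList).map
          (fun M => (q, M)))).filter
        (fun qM => decide (∀ la ∈ A.gc.cntAtoms, la.2 ≤ lvalF qM.2 la.1))
    eqs := A.eqs
    gc := GC.and
      (conjList ((A.gc.eqAtoms).flatMap (fun qq =>
        ((Finset.univ : Finset (Q → Fin (A.gc.maxConst + 1))).toList).flatMap (fun M1 =>
          ((Finset.univ : Finset (Q → Fin (A.gc.maxConst + 1))).toList).map (fun M2 =>
            GC.atom (GAtom.eq (qq.1, M1) (qq.2, M2)))))))
      (conjList ((A.gc.neqAtoms).flatMap (fun qq =>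
        ((Finset.univ : Finset (Q → Fin (A.gc.maxConst + 1))).toList).flatMap (fun M1 =>
          ((Finset.univ : Finset (Q → Fin (A.gc.maxConst + 1))).toList).map (fun M2 =>
            GC.atom (GAtom.neq (qq.1, M1) (qq.2, M2))))))) }

/-! ### Global pumpings -/

section Pump

variable {F Q : Type}

/-- `H_i` : positions of subruns of positive height equal to `i`. -/
def Hset (r : Run F Q) (i : ℕ) : Set (List ℕ) :=
  {p | ∃ s, RTerm.SubAt r p s ∧ 0 < RTerm.height s ∧ RTerm.height s = i}

/-- `Ȟ_i` : positions `p.j` of subruns of positive height `< i` whose parent has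
height `> i`. -/
def Hcheck (r : Run F Q) (i : ℕ) : Set (List ℕ) :=
  {p' | ∃ (p : List ℕ) (j : ℕ) (s s' : Run F Q), p' = p ++ [j] ∧
    RTerm.SubAt r p s ∧ RTerm.SubAt r p' s' ∧
    0 < RTerm.height s' ∧ RTerm.height s' < i ∧ i < RTerm.height s}

/-- `H̊_i` : positions `p.j` of subruns of height `0` (with `0 < i`) whose parent
has height `> i`. -/
def Hring (r : Run F Q) (i : ℕ) : Set (List ℕ) :=
  {p' | ∃ (p : List ℕ) (j : ℕ) (s s' : Run F Q), p' = p ++ [j] ∧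
    RTerm.SubAt r p s ∧ RTerm.SubAt r p' s' ∧
    RTerm.height s' = 0 ∧ 0 < i ∧ i < RTerm.height s}

def Dom (r : Run F Q) (i : ℕ) : Set (List ℕ) := Hset r i ∪ Hcheck r i ∪ Hring r i

/-- A pump-injection `I : (H_i ∪ Ȟ_i ∪ H̊_i) → (H_j ∪ Ȟ_j ∪ H̊_j)`. -/
structure PumpInj (E : List (Pat F × Pat F)) (r : Run F Q) (i j : ℕ)
    (I : List ℕ → List ℕ) : Prop where
  inj : Set.InjOn I (Dom r i)
  mapsH : Set.MapsTo I (Hset r i) (Hset r j)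
  mapsHc : Set.MapsTo I (Hcheck r i) (Hcheck r j)
  mapsHr : Set.MapsTo I (Hring r i) (Hring r j)
  idRing : ∀ p ∈ Hring r i, I p = p
  stPres : ∀ p ∈ Dom r i, ∀ s s', RTerm.SubAt r p s → RTerm.SubAt r (I p) s' →
    Run.state s = Run.state s'
  eqPres : ∀ p1 p2, p1 ∈ Dom r i → p2 ∈ Dom r i →
    ∀ s1 s2 s1' s2', RTerm.SubAt r p1 s1 → RTerm.SubAt r p2 s2 →
      RTerm.SubAt r (I p1) s1' → RTerm.SubAt r (I p2) s2' →
      (EqE E (Run.term s1) (Run.term s2) ↔ EqE E (Run.term s1') (Run.term s2'))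

/-- Simultaneous replacement at all positions of `D` (which are assumed to be
pairwise parallel): at a position of `D` the subtree is replaced by a tree
allowed by `ρ`, elsewhere the tree is kept. -/
inductive MultiRepl {β : Type} (D : Set (List ℕ)) (ρ : List ℕ → RTerm β → Prop) :
    List ℕ → RTerm β → RTerm β → Prop
  | here {p : List ℕ} {t t' : RTerm β} : p ∈ D → ρ p t' → MultiRepl D ρ p t t'
  | node {p : List ℕ} {f : β} {ts ts' : List (RTerm β)} :
      p ∉ D → ts.length = ts'.length →
      (∀ k u u', ts[k]? = some u → ts'[k]? = some u' →
        MultiRepl D ρ (p ++ [k]) u u') →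
      MultiRepl D ρ p (RTerm.node f ts) (RTerm.node f ts')

/-- `r'` is the global pumping on `r` with indexes `i,j` and injection `I`. -/
def IsGlobalPumpingWith (E : List (Pat F × Pat F)) (r : Run F Q) (i j : ℕ)
    (I : List ℕ → List ℕ) (r' : Run F Q) : Prop :=
  PumpInj E r i j I ∧
  MultiRepl (Dom r i) (fun p s => RTerm.SubAt r (I p) s) [] r r'

/-- The `=E`-classes of the subterms at positions of `P`. -/
def classesAt (E : List (Pat F × Pat F)) (r : Run F Q) (P : Set (List ℕ)) :
    Set (Set (RTerm F)) :=
  classesOf E {t | ∃ p ∈ P, ∃ s, RTerm.SubAt r p s ∧ Run.term s = t}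

/-- The tuple `r_{t,P}` of a class `C`, as a function on states. -/
noncomputable def tupleAt (r : Run F Q) (P : Set (List ℕ)) (C : Set (RTerm F))
    (q : Q) : ℕ :=
  {p | p ∈ P ∧ ∃ s, RTerm.SubAt r p s ∧ Run.state s = q ∧ Run.term s ∈ C}.ncard

/-- The multiset ordering `r_P ≤ r_{P'}` : an injection on classes which is
dominating on the associated tuples. -/
def MsetLE (E : List (Pat F × Pat F)) (r : Run F Q) (P P' : Set (List ℕ)) : Prop :=
  ∃ φ : Set (RTerm F) → Set (RTerm F),
    Set.InjOn φ (classesAt E r P) ∧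
    Set.MapsTo φ (classesAt E r P) (classesAt E r P') ∧
    ∀ C ∈ classesAt E r P, ∀ q, tupleAt r P C q ≤ tupleAt r P' (φ C) q

end Pump

/-! ### Multisets of tuples of naturals (for the well quasi-ordering) -/

def TupLE {n : ℕ} (x y : Fin n → ℕ) : Prop := ∀ k, x k ≤ y k

/-- Multiset ordering: an injection mapping each element to a dominating one. -/
def MLE {n : ℕ} (S T : Multiset (Fin n → ℕ)) : Prop :=
  ∃ T' : Multiset (Fin n → ℕ), T' ≤ T ∧ Multiset.Rel TupLE S T'

def msumT {n : ℕ} (S : Multiset (Fin n → ℕ)) : ℕ :=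
  (S.map (fun x => ∑ k, x k)).sum

/-! ### Hedge automata with global constraints, and currying -/

/-- A finite word automaton over the alphabet `Q` (auxiliary states are naturals). -/
structure WordAut (Q : Type) where
  stS : Finset ℕ
  init : ℕ
  final : List ℕ
  trans : List (ℕ × Q × ℕ)

inductive WAccepts {Q : Type} (W : WordAut Q) : ℕ → List Q → Prop
  | nil {s : ℕ} : s ∈ W.final → WAccepts W s []
  | cons {s : ℕ} {q : Q} {s' : ℕ} {w : List Q} :
      (s, q, s') ∈ W.trans → WAccepts W s' w → WAccepts W s (q :: w)

def WordAut.Lang {Q : Type} (W : WordAut Q) (w : List Q) : Prop := WAccepts W W.init w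

/-- Transition rule `a(L) → q` of a hedge automaton. -/
structure HRule (F Q : Type) where
  sym : F
  wa : WordAut Q
  res : Q

/-- Hedge automaton with global constraints, over unranked ordered terms. -/
structure HAG (F Q : Type) where
  stQ : Finset Q
  rules : List (HRule F Q)
  final : List Q
  gc : GC Q

abbrev HRun (F Q : Type) := RTerm (HRule F Q)

def HRun.state {F Q : Type} (r : HRun F Q) : Q := (RTerm.rootLabel r).res
def HRun.term {F Q : Type} (r : HRun F Q) : RTerm F := r.map HRule.sym

inductive IsHRun {F Q : Type} (Δ : List (HRule F Q)) : HRun F Q → Prop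
  | node {ρ : HRule F Q} {rs : List (HRun F Q)} :
      ρ ∈ Δ → ρ.wa.Lang (rs.map HRun.state) →
      (∀ r ∈ rs, IsHRun Δ r) → IsHRun Δ (RTerm.node ρ rs)

def HAG.Lang {F Q : Type} (A : HAG F Q) : Set (RTerm F) :=
  {t | ∃ r : HRun F Q, IsHRun A.rules r ∧
        satGC ([] : List (Pat F × Pat F)) HRule.res HRule.sym r A.gc ∧
        HRun.state r ∈ A.final ∧ HRun.term r = t}

/-- The ranked signature `Σ_@` : symbols of `Σ` become constants, `none` is the
binary symbol `@`. -/
def arAt {F : Type} : Option F → ℕ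
  | none => 2
  | some _ => 0

/-- The `curry` encoding of unranked terms into ranked terms over `Σ_@`. -/
inductive Curried {F : Type} : RTerm F → RTerm (Option F) → Prop
  | base {a : F} : Curried (RTerm.node a []) (RTerm.node (some a) [])
  | step {a : F} {ts : List (RTerm F)} {t : RTerm F} {u v : RTerm (Option F)} :
      Curried (RTerm.node a ts) u → Curried t v →
      Curried (RTerm.node a (ts ++ [t])) (RTerm.node none [u, v])

/-! ### Concrete signatures and languages -/

/-- The signature `{a:0, s:1, f:2}` (resp. `{a:0, g:1, f:2}`): symbol `0` has
arity 0, symbol `1` arity 1, symbol `2` arity 2. -/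
def ar3 : Fin 3 → ℕ := ![0, 1, 2]

/-- `iter1 n` is `s^n(a)` (resp. `g^n(a)`). -/
def iter1 : ℕ → RTerm (Fin 3)
  | 0 => RTerm.node 0 []
  | n + 1 => RTerm.node 1 [iter1 n]

/-- `chain [n1,…,nk] = f(s^{n1}(a), f(s^{n2}(a), …, f(s^{nk}(a), a)…))`. -/
def chain : List ℕ → RTerm (Fin 3)
  | [] => RTerm.node 0 []
  | n :: ns => RTerm.node 2 [iter1 n, chain ns]

/-- The language of chains with pairwise distinct exponents. -/
def LKey : Set (RTerm (Fin 3)) := {t | ∃ ns : List ℕ, ns.Nodup ∧ t = chain ns}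

/-- `bracket [n1,…,nk] = f(g^{n1}(a), f(…, f(g^{n_{k−1}}(a), g^{n_k}(a))…))`. -/
def bracket : List ℕ → RTerm (Fin 3)
  | [] => RTerm.node 0 []
  | [n] => iter1 n
  | n :: ns => RTerm.node 2 [iter1 n, bracket ns]

/-- Every entry has exactly one partner with the same value. -/
def ExactlyOnePartner (ns : List ℕ) : Prop :=
  ∀ i, i < ns.length → ∃! j, j < ns.length ∧ j ≠ i ∧ ns[i]? = ns[j]?

def LDup : Set (RTerm (Fin 3)) :=
  {t | ∃ ns : List ℕ, ns ≠ [] ∧ ExactlyOnePartner ns ∧ t = bracket ns}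

/-! ### Concrete, codable presentations of automata -/

abbrev RuleData := ℕ × List ℕ × List (ℕ × ℕ) × List (ℕ × ℕ) × ℕ
abbrev PatAtomData := ℕ ⊕ ℕ
abbrev FlatSideData := PatAtomData ⊕ (ℕ × List PatAtomData)
abbrev LinData := List (ℤ × ℕ) × ℤ
abbrev GAtomData := (ℕ × ℕ) ⊕ ((ℕ × ℕ) ⊕ (LinData ⊕ LinData))
abbrev GCNodeData := GAtomData ⊕ (ℕ × ℕ × ℕ)
abbrev TABGData :=
  List (ℕ × ℕ) × List RuleData × List ℕ × List (FlatSideData × FlatSideData) ×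
    List GCNodeData

def decodePatAtom : PatAtomData → Pat ℕ
  | Sum.inl v => Pat.var v
  | Sum.inr c => Pat.node c []

def decodeSide : FlatSideData → Pat ℕ
  | Sum.inl a => decodePatAtom a
  | Sum.inr (f, l) => Pat.node f (l.map decodePatAtom)

def decodeGAtom : GAtomData → GAtom ℕ
  | Sum.inl (q, q') => GAtom.eq q q'
  | Sum.inr (Sum.inl (q, q')) => GAtom.neq q q'
  | Sum.inr (Sum.inr (Sum.inl (l, a))) => GAtom.cnt l a
  | Sum.inr (Sum.inr (Sum.inr (l, a))) => GAtom.cls l a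

def decodeGC (nodes : List GCNodeData) : ℕ → ℕ → GC ℕ
  | 0, _ => GC.tt
  | fuel + 1, i =>
    match nodes[i]? with
    | some (Sum.inl a) => GC.atom (decodeGAtom a)
    | some (Sum.inr (op, l, rr)) =>
      if op = 0 then GC.tt
      else if op = 1 then GC.ff
      else if op = 2 then GC.and (decodeGC nodes fuel l) (decodeGC nodes fuel rr)
      else if op = 3 then GC.or (decodeGC nodes fuel l) (decodeGC nodes fuel rr)
      else GC.not (decodeGC nodes fuel l)
    | none => GC.tt

def decodeRule : RuleData → Rule ℕ ℕ
  | (f, args, be, bn, q) => ⟨f, args, be, bn, q⟩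

def decodeArity (sig : List (ℕ × ℕ)) : ℕ → ℕ :=
  fun f => (((sig.find? (fun p => p.1 == f)).map Prod.snd).getD 0)

def dataStates (rules : List RuleData) (final : List ℕ) : Finset ℕ :=
  (rules.flatMap (fun r => r.2.2.2.2 :: r.2.1)).toFinset ∪ final.toFinset

/-- Decoding of a full TABG with arbitrary Boolean global constraint. -/
def decodeTABG (d : TABGData) : TABG ℕ ℕ :=
  { arity := decodeArity d.1
    stQ := dataStates d.2.1 d.2.2.1
    rules := d.2.1.map decodeRule
    final := d.2.2.1
    eqs := d.2.2.2.1.map (fun e => (decodeSide e.1, decodeSide e.2))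
    gc := decodeGC d.2.2.2.2 (d.2.2.2.2).length 0 }

/-- Data for a `TAG^∧[≈]` : signature, rules (no brother constraints), final
states, and a conjunction of equational atoms `q ≈ q'`. -/
abbrev TAGCEData := List (ℕ × ℕ) × List (ℕ × List ℕ × ℕ) × List ℕ × List (ℕ × ℕ)

def decodeTAGCE (d : TAGCEData) : TABG ℕ ℕ :=
  { arity := decodeArity d.1
    stQ := (d.2.1.flatMap (fun r => r.2.2 :: r.2.1)).toFinset ∪ d.2.2.1.toFinset
    rules := d.2.1.map (fun r => ⟨r.1, r.2.1, [], [], r.2.2⟩)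
    final := d.2.2.1
    eqs := []
    gc := conjList (d.2.2.2.map (fun qq => GC.atom (GAtom.eq qq.1 qq.2))) }

/-- Data for a `TAG^∧[≈, |.|_ℤ]` : as above plus a conjunction of integer linear
inequalities. -/
abbrev TAGCZData :=
  List (ℕ × ℕ) × List (ℕ × List ℕ × ℕ) × List ℕ × List (ℕ × ℕ) × List LinData

def decodeTAGCZ (d : TAGCZData) : TABG ℕ ℕ :=
  { arity := decodeArity d.1
    stQ := (d.2.1.flatMap (fun r => r.2.2 :: r.2.1)).toFinset ∪ d.2.2.1.toFinset
    rules := d.2.1.map (fun r => ⟨r.1, r.2.1, [], [], r.2.2⟩)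
    final := d.2.2.1
    eqs := []
    gc := conjList
      (d.2.2.2.1.map (fun qq => GC.atom (GAtom.eq qq.1 qq.2)) ++
       d.2.2.2.2.map (fun la => GC.atom (GAtom.cnt la.1 la.2))) }

/-- A tree language over the ranked signature `ar` is regular if it is the
language of a plain tree automaton. -/
def IsRegular (ar : ℕ → ℕ) (L : Set (RTerm ℕ)) : Prop :=
  ∃ (n : ℕ) (B : TABG ℕ (Fin n)), B.arity = ar ∧ B.WF ∧ B.IsTA ∧ B.Lang = L

/-! ### Automata classes as predicates -/

/-- A TAGED: a TAG whose constraint is a conjunction of atoms `q ≈ q'`, `q ≉ q'`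
without reflexive disequalities. -/
def TAGEDCond {F Q : Type} (A : TABG F Q) : Prop :=
  A.IsTAG ∧ A.gc.IsConjAtoms ∧ A.gc.AtomsAre GAtom.IsEqNeq ∧ A.gc.NoReflNeq

/-- A positive conjunctive TAG with eq/neq atoms (`TAG^∧[≈,≉]`). -/
def TAGCwCond {F Q : Type} (A : TABG F Q) : Prop :=
  A.IsTAG ∧ A.gc.IsConjAtoms ∧ A.gc.AtomsAre GAtom.IsEqNeq

end TreeAut

/-!
Every position of the pumped run `r'` is traced back to a position of `r`. Either it lies in a copy
of some subrun `r|_{I d}` with `d ∈ H_i ∪ Ȟ_i ∪ H̊_i`, which has height at most `j`, or it lies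
above all replaced positions, and then its subrun is the pumping of a subrun of `r` of height `> i`,
of height `> j` and smaller than before. Distinct positions of `r'` have distinct origins (`I` is
injective and `H_j ∪ Ȟ_j ∪ H̊_j` is an antichain) carrying the same states, and two subruns of `r'`
are `=E`-equal iff their origins are. Copied versus pumped subruns are never `=E`-equal on either
side, because flat equations preserve height. For two pumped subruns one argues by induction on the
height, using (C3) for replaced children: since `E` is flat, a rewrite step at the root of
`f(t₁, …, tₙ)` only duplicates or permutes the children matched by variables and exchanges
constants, so an `=E`-derivation can be replayed after replacing every child by one with the same
`=E`-behaviour (`Twins.eqE_iff`). Hence the conjunctive constraints `q ≈ q'`, `q ≉ q'` and the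
brother constraints transfer from `r` to `r'`.
-/

theorem List.forall₂_of_getElem? {α β : Type*} {R : α → β → Prop} {l₁ : List α} {l₂ : List β}
    (hlen : l₁.length = l₂.length)
    (h : ∀ (k : ℕ) a b, l₁[k]? = some a → l₂[k]? = some b → R a b) : List.Forall₂ R l₁ l₂ :=
  List.forall₂_of_length_eq_of_get hlen fun k h₁ h₂ => h k _ _ (by simp) (by simp)

theorem List.exists_getElem?_of_length_eq {α β : Type*} {l₁ : List α} {l₂ : List β}
    (hlen : l₁.length = l₂.length) {k : ℕ} {a : α} (ha : l₁[k]? = some a) :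
    ∃ b, l₂[k]? = some b :=
  ⟨_, List.getElem?_eq_getElem (hlen ▸ (List.getElem?_eq_some_iff.1 ha).1)⟩

theorem List.Forall₂.exists_of_mem_left {α β : Type*} {R : α → β → Prop} {l₁ : List α}
    {l₂ : List β} (h : List.Forall₂ R l₁ l₂) {a : α} (ha : a ∈ l₁) : ∃ b ∈ l₂, R a b := by
  induction h with
  | nil => simp at ha
  | cons hab _ ih =>
    rcases List.mem_cons.1 ha with rfl | ha
    · exact ⟨_, List.mem_cons_self, hab⟩
    · obtain ⟨b, hb, hab⟩ := ih ha
      exact ⟨b, List.mem_cons_of_mem _ hb, hab⟩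

theorem List.Forall₂.set_left {α β : Type*} {R : α → β → Prop} {l₁ : List α} {l₂ : List β}
    (h : List.Forall₂ R l₁ l₂) {k : ℕ} {a a' : α} (hk : l₁[k]? = some a)
    (ha : ∀ b, R a b → R a' b) : List.Forall₂ R (l₁.set k a') l₂ := by
  induction h generalizing k with
  | nil => simp
  | cons hab _ ih =>
    cases k with
    | zero =>
      obtain rfl := Option.some.inj hk
      exact .cons (ha _ hab) ‹_›
    | succ k => exact .cons hab (ih hk)

namespace TreeAut

variable {F G Q β : Type}

namespace RTerm

theorem SubAt.nil_eq {t s : RTerm F} (h : SubAt t [] s) : s = t := by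
  cases h; rfl

theorem subAt_cons_iff {f : F} {ts : List (RTerm F)} {k : ℕ} {q : List ℕ} {s : RTerm F} :
    SubAt (node f ts) (k :: q) s ↔ ∃ u, ts[k]? = some u ∧ SubAt u q s :=
  ⟨fun h => by cases h with | step hu hs => exact ⟨_, hu, hs⟩, fun ⟨_, hu, hs⟩ => .step hu hs⟩

theorem ReplAt.nil_eq {t t' a : RTerm F} (h : ReplAt t [] a t') : t' = a := by
  cases h; rfl

theorem SubAt.det {t s s' : RTerm F} {p : List ℕ} (h : SubAt t p s) (h' : SubAt t p s') :
    s = s' := by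
  induction h with
  | refl => exact h'.nil_eq.symm
  | step hu _ ih =>
    obtain ⟨u', hu', hs'⟩ := subAt_cons_iff.1 h'
    exact ih (Option.some.inj (hu.symm.trans hu') ▸ hs')

theorem SubAt.append {t u s : RTerm F} {p q : List ℕ} (h : SubAt t p u) (h' : SubAt u q s) :
    SubAt t (p ++ q) s := by
  induction h with
  | refl => exact h'
  | step hu _ ih => exact .step hu (ih h')

theorem SubAt.of_append {t s : RTerm F} {p q : List ℕ} (h : SubAt t (p ++ q) s) :
    ∃ u, SubAt t p u ∧ SubAt u q s := by
  induction p generalizing t with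
  | nil => exact ⟨t, .refl t, h⟩
  | cons k p ih =>
    cases h with
    | step hu hs =>
      obtain ⟨u, hpu, huq⟩ := ih hs
      exact ⟨u, .step hu hpu, huq⟩

theorem lt_height_node_iff {f : F} {ts : List (RTerm F)} {n : ℕ} :
    n < height (node f ts) ↔ ∃ u ∈ ts, n ≤ height u := by
  induction ts with
  | nil => simp [height]
  | cons t ts ih => simp [height, ih]

theorem height_node_le_succ_iff {f : F} {ts : List (RTerm F)} {n : ℕ} :
    height (node f ts) ≤ n + 1 ↔ ∀ u ∈ ts, height u ≤ n := by
  rw [← not_lt, lt_height_node_iff]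
  simp

theorem height_node_eq_zero_iff {f : F} {ts : List (RTerm F)} :
    height (node f ts) = 0 ↔ ts = [] := by
  rw [← Nat.le_zero, ← not_lt, lt_height_node_iff]
  simp [List.eq_nil_iff_forall_not_mem]

theorem height_lt_height_of_mem {f : F} {ts : List (RTerm F)} {u : RTerm F} (h : u ∈ ts) :
    height u < height (node f ts) :=
  lt_height_node_iff.2 ⟨u, h, le_rfl⟩

theorem height_node_set {f : F} {ts : List (RTerm F)} {k : ℕ} {u u' : RTerm F}
    (hk : ts[k]? = some u) (hu : height u' = height u) :
    height (node f (ts.set k u')) = height (node f ts) := by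
  induction ts generalizing k with
  | nil => simp
  | cons t ts ih =>
    cases k with
    | zero =>
      obtain rfl : t = u := by simpa using hk
      simp [height, hu]
    | succ k => simp [height, ih (by simpa using hk)]

theorem SubAt.height_le {t s : RTerm F} {p : List ℕ} (h : SubAt t p s) :
    height s ≤ height t := by
  induction h with
  | refl => exact le_rfl
  | step hu _ ih => exact ih.trans (height_lt_height_of_mem (List.mem_of_getElem? hu)).le

theorem SubAt.height_lt {t s : RTerm F} {p : List ℕ} (h : SubAt t p s) (hp : p ≠ []) :
    height s < height t := by
  cases h with
  | refl => exact absurd rfl hp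
  | step hu hs => exact hs.height_le.trans_lt (height_lt_height_of_mem (List.mem_of_getElem? hu))

theorem SubAt.height_le_of_append {t s u : RTerm F} {p q : List ℕ}
    (h : SubAt t (p ++ q) s) (hu : SubAt t p u) : height s ≤ height u := by
  obtain ⟨u', hu', hs⟩ := h.of_append
  exact hu.det hu' ▸ hs.height_le

theorem map_node (g : F → G) (f : F) (ts : List (RTerm F)) :
    map g (node f ts) = node (g f) (ts.map (map g)) := by
  rw [map]
  simp

theorem height_map (g : F → G) : ∀ t : RTerm F, height (map g t) = height t
  | node f ts => by
    have ih : ∀ u ∈ ts, height (map g u) = height u := fun u hu => height_map g u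
    rw [map_node]
    refine eq_of_forall_lt_iff fun n => ?_
    simp only [lt_height_node_iff, List.mem_map, exists_exists_and_eq_and]
    exact exists_congr fun u => and_congr_right fun hu => by rw [ih u hu]
decreasing_by
  simp only [RTerm.node.sizeOf_spec]
  have := List.sizeOf_lt_of_mem hu
  omega

theorem ReplAt.subAt {t t' a : RTerm F} {p : List ℕ} (h : ReplAt t p a t') : SubAt t' p a := by
  induction h with
  | here => exact .refl _
  | step hu _ ih => exact .step (List.getElem?_set_self (List.getElem?_eq_some_iff.1 hu).1) ih

theorem ReplAt.symm {t t' a b : RTerm F} {p : List ℕ} (hb : SubAt t p b)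
    (h : ReplAt t p a t') : ReplAt t' p b t := by
  induction h generalizing b with
  | here => exact hb.nil_eq ▸ .here _ _
  | @step f ts k u u' s q hu _ ih =>
    obtain ⟨u₀, hu₀, hb⟩ := subAt_cons_iff.1 hb
    obtain rfl : u₀ = u := Option.some.inj (hu₀.symm.trans hu)
    obtain ⟨hk, rfl⟩ := List.getElem?_eq_some_iff.1 hu
    have := ReplAt.step (f := f) (List.getElem?_set_self (a := u') hk) (ih hb)
    rwa [List.set_set, List.set_getElem_self] at this

theorem ReplAt.height_eq {s t a b : RTerm F} {p : List ℕ} (h : ReplAt s p a t)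
    (hb : SubAt s p b) (hab : height a = height b) : height t = height s := by
  induction h generalizing b with
  | here => rw [hab, hb.nil_eq]
  | step hu _ ih =>
    obtain ⟨u₀, hu₀, hb⟩ := subAt_cons_iff.1 hb
    obtain rfl := Option.some.inj (hu₀.symm.trans hu)
    exact height_node_set hu (ih hb hab)

end RTerm

open RTerm

section Equational

variable {E : List (Pat F × Pat F)}

theorem Rew.symm {s t : RTerm F} (h : Rew E s t) : Rew E t s := by
  obtain ⟨l, r, hlr, σ, p, hs, ht⟩ := h
  exact ⟨r, l, hlr.symm, σ, p, ht.subAt, ht.symm hs⟩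

theorem EqE.refl (t : RTerm F) : EqE E t t := Relation.ReflTransGen.refl

theorem EqE.trans {s t u : RTerm F} (h : EqE E s t) (h' : EqE E t u) : EqE E s u :=
  Relation.ReflTransGen.trans h h'

theorem EqE.symm {s t : RTerm F} (h : EqE E s t) : EqE E t s := by
  induction h with
  | refl => exact .refl _
  | tail _ hst ih => exact Relation.ReflTransGen.head hst.symm ih

theorem Rew.node_set {f : F} {ts : List (RTerm F)} {k : ℕ} {a b : RTerm F}
    (hk : ts[k]? = some a) (h : Rew E a b) : Rew E (node f ts) (node f (ts.set k b)) := by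
  obtain ⟨l, r, hlr, σ, p, hs, ht⟩ := h
  exact ⟨l, r, hlr, σ, k :: p, .step hk hs, .step hk ht⟩

theorem EqE.node_set {f : F} {ts : List (RTerm F)} {k : ℕ} {a b : RTerm F}
    (hk : ts[k]? = some a) (h : EqE E a b) : EqE E (node f ts) (node f (ts.set k b)) := by
  induction h with
  | refl =>
    obtain ⟨hk', rfl⟩ := List.getElem?_eq_some_iff.1 hk
    rw [List.set_getElem_self]
    exact .refl _
  | tail _ hcd ih =>
    refine ih.tail ?_
    have := Rew.node_set (f := f) (List.getElem?_set_self (List.getElem?_eq_some_iff.1 hk).1) hcd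
    rwa [List.set_set] at this

theorem EqE.node_of_forall₂ (f : F) {ts ts' : List (RTerm F)}
    (h : List.Forall₂ (EqE E) ts ts') : EqE E (node f ts) (node f ts') := by
  suffices ∀ pre, EqE E (node f (pre ++ ts)) (node f (pre ++ ts')) by simpa using this []
  induction h with
  | nil => exact fun _ => .refl _
  | @cons a b ts ts' hab _ ih =>
    intro pre
    have hstep := EqE.node_set (f := f) (k := pre.length) (ts := pre ++ a :: ts) (by simp) hab
    simp only [List.set_append_right _ _ le_rfl, Nat.sub_self, List.set_cons_zero] at hstep
    have hrest := ih (pre ++ [b])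
    simp only [List.append_assoc, List.singleton_append] at hrest
    exact hstep.trans hrest

end Equational

namespace Pat

theorem subst_var (σ : ℕ → RTerm F) (x : ℕ) : (Pat.var x).subst σ = σ x := by
  rw [subst]

theorem subst_node (σ : ℕ → RTerm F) (f : F) (ps : List (Pat F)) :
    (Pat.node f ps).subst σ = .node f (ps.map (subst σ)) := by
  rw [subst]
  simp

theorem eq_var_or_const_of_height_eq_zero {p : Pat F} (h : p.height = 0) :
    (∃ x, p = .var x) ∨ ∃ c, p = .node c [] := by
  rcases p with x | ⟨c, _ | ⟨_, _⟩⟩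
  · exact .inl ⟨x, rfl⟩
  · exact .inr ⟨c, rfl⟩
  · simp [height] at h

theorem height_eq_zero_of_mem {f : F} {ps : List (Pat F)} {p : Pat F}
    (h : (Pat.node f ps).height ≤ 1) (hp : p ∈ ps) : p.height = 0 := by
  induction ps with
  | nil => simp at hp
  | cons q ps ih =>
    simp only [height] at h
    rcases List.mem_cons.1 hp with rfl | hp
    · omega
    · exact ih (by omega) hp

theorem not_hasVar_const (x : ℕ) (c : F) : ¬ (Pat.node c []).HasVar x := by
  intro h
  cases h with
  | node hmem _ => simp at hmem

theorem hasVar_node_iff {x : ℕ} {f : F} {ps : List (Pat F)} (h : (Pat.node f ps).height ≤ 1) :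
    (Pat.node f ps).HasVar x ↔ Pat.var x ∈ ps := by
  constructor
  · rintro (_ | ⟨hp, hx⟩)
    rcases eq_var_or_const_of_height_eq_zero (height_eq_zero_of_mem h hp) with ⟨y, rfl⟩ | ⟨c, rfl⟩
    · cases hx
      exact hp
    · exact absurd hx (not_hasVar_const x c)
  · exact fun hx => .node hx .var

theorem height_subst_le_succ_iff {f : F} {ps : List (Pat F)} (σ : ℕ → RTerm F) {n : ℕ}
    (h : (Pat.node f ps).height ≤ 1) :
    ((Pat.node f ps).subst σ).height ≤ n + 1 ↔
      ∀ x, (Pat.node f ps).HasVar x → (σ x).height ≤ n := by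
  simp only [subst_node, height_node_le_succ_iff, List.forall_mem_map, hasVar_node_iff h]
  refine ⟨fun hps x hx => by simpa [subst_var] using hps _ hx, fun hvars p hp => ?_⟩
  rcases eq_var_or_const_of_height_eq_zero (height_eq_zero_of_mem h hp) with ⟨x, rfl⟩ | ⟨c, rfl⟩
  · simpa [subst_var] using hvars x hp
  · simp [subst_node, RTerm.height]

theorem height_subst_pos {f : F} {ps : List (Pat F)} (σ : ℕ → RTerm F)
    (h : (Pat.node f ps).height = 1) : 0 < ((Pat.node f ps).subst σ).height := by
  rw [Nat.pos_iff_ne_zero, subst_node, Ne, height_node_eq_zero_iff, List.map_eq_nil_iff]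
  rintro rfl
  simp [height] at h

end Pat

section Flat

variable {ar : F → ℕ}

theorem IsFlatEq.symm {l r : Pat F} (h : IsFlatEq ar (l, r)) : IsFlatEq ar (r, l) := by
  obtain ⟨hl, hr, hh, h1, hv⟩ := h
  exact ⟨hr, hl, hh.symm, hh ▸ h1, fun x => (hv x).symm⟩

theorem IsFlatEq.shape {l r : Pat F} (h : IsFlatEq ar (l, r)) :
    (∃ x, l = .var x ∧ r = .var x) ∨ (∃ c d, l = .node c [] ∧ r = .node d []) ∨
      ∃ g ps g' qs, l = .node g ps ∧ r = .node g' qs ∧ l.height = 1 ∧ r.height = 1 := by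
  obtain ⟨-, -, hh, h1, hv⟩ := h
  simp only at hh h1 hv
  rcases Nat.le_one_iff_eq_zero_or_eq_one.1 h1 with h0 | h1
  · rcases Pat.eq_var_or_const_of_height_eq_zero h0 with ⟨x, rfl⟩ | ⟨c, rfl⟩ <;>
      rcases Pat.eq_var_or_const_of_height_eq_zero (hh ▸ h0) with ⟨y, rfl⟩ | ⟨d, rfl⟩
    · cases (hv x).1 .var
      exact .inl ⟨x, rfl, rfl⟩
    · exact absurd ((hv x).1 .var) (Pat.not_hasVar_const x d)
    · exact absurd ((hv y).2 .var) (Pat.not_hasVar_const y c)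
    · exact .inr (.inl ⟨c, d, rfl, rfl⟩)
  · rcases l with _ | ⟨g, ps⟩
    · simp [Pat.height] at h1
    rcases r with _ | ⟨g', qs⟩
    · simp [Pat.height] at hh h1; omega
    exact .inr (.inr ⟨g, ps, g', qs, rfl, rfl, h1, hh ▸ h1⟩)

theorem IsFlatEq.height_subst {l r : Pat F} (h : IsFlatEq ar (l, r)) (σ : ℕ → RTerm F) :
    (l.subst σ).height = (r.subst σ).height := by
  have hv := h.2.2.2.2
  rcases h.shape with ⟨x, rfl, rfl⟩ | ⟨c, d, rfl, rfl⟩ | ⟨g, ps, g', qs, rfl, rfl, hl, hr⟩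
  · rfl
  · simp [Pat.subst_node, RTerm.height]
  · refine eq_of_forall_ge_iff fun n => ?_
    rcases n with _ | n
    · simp only [Nat.le_zero, (Pat.height_subst_pos σ hl).ne', (Pat.height_subst_pos σ hr).ne']
    · rw [Pat.height_subst_le_succ_iff σ hl.le, Pat.height_subst_le_succ_iff σ hr.le]
      exact forall_congr' fun x => imp_congr_left (hv x)

theorem Rew.height_eq {E : List (Pat F × Pat F)} (hE : ∀ e ∈ E, IsFlatEq ar e) {s t : RTerm F}
    (h : Rew E s t) : height t = height s := by
  obtain ⟨l, r, hlr, σ, p, hs, ht⟩ := h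
  have hflat : IsFlatEq ar (l, r) := hlr.elim (hE _) fun h => (hE _ h).symm
  exact ht.height_eq hs (hflat.height_subst σ).symm

theorem EqE.height_eq {E : List (Pat F × Pat F)} (hE : ∀ e ∈ E, IsFlatEq ar e) {s t : RTerm F}
    (h : EqE E s t) : height s = height t := by
  induction h with
  | refl => rfl
  | tail _ hst ih => rw [ih, Rew.height_eq hE hst]

end Flat

section Twins

variable {E : List (Pat F × Pat F)} {ar : F → ℕ}

structure IsEqEMatching (E : List (Pat F × Pat F)) (S : RTerm F → RTerm F → Prop) : Prop where
  height_pos : ∀ a a', S a a' → 0 < height a ∧ 0 < height a'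
  eqE_iff : ∀ a a' b b', S a a' → S b b' → (EqE E a b ↔ EqE E a' b')

theorem IsEqEMatching.flip {S : RTerm F → RTerm F → Prop} (hS : IsEqEMatching E S) :
    IsEqEMatching E (flip S) :=
  ⟨fun _ _ h => (hS.height_pos _ _ h).symm, fun _ _ _ _ ha hb => (hS.eqE_iff _ _ _ _ ha hb).symm⟩

def Twin (E : List (Pat F × Pat F)) (S : RTerm F → RTerm F → Prop) (a a' : RTerm F) : Prop :=
  (height a = 0 ∧ EqE E a a') ∨ ∃ b b', S b b' ∧ EqE E a b ∧ EqE E a' b'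

def Twins (E : List (Pat F × Pat F)) (S : RTerm F → RTerm F → Prop) (u u' : RTerm F) : Prop :=
  ∃ f ts ts', u = node f ts ∧ u' = node f ts' ∧ List.Forall₂ (Twin E S) ts ts'

variable (hE : ∀ e ∈ E, IsFlatEq ar e) {S : RTerm F → RTerm F → Prop}
include hE

theorem Twin.of_eqE_left {a a' b : RTerm F} (h : Twin E S a a') (hab : EqE E a b) :
    Twin E S b a' := by
  rcases h with ⟨h0, ha⟩ | ⟨c, c', hc, hac, hac'⟩
  · exact .inl ⟨EqE.height_eq hE hab ▸ h0, hab.symm.trans ha⟩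
  · exact .inr ⟨c, c', hc, hab.symm.trans hac, hac'⟩

theorem Twin.flip {a a' : RTerm F} (h : Twin E S a a') : Twin E (flip S) a' a := by
  rcases h with ⟨h0, ha⟩ | ⟨c, c', hc, hac, hac'⟩
  · exact .inl ⟨EqE.height_eq hE ha ▸ h0, ha.symm⟩
  · exact .inr ⟨c', c, hc, hac', hac⟩

theorem Twins.flip {u u' : RTerm F} (h : Twins E S u u') : Twins E (flip S) u' u := by
  obtain ⟨f, ts, ts', rfl, rfl, hts⟩ := h
  exact ⟨f, ts', ts, rfl, rfl, List.Forall₂.flip (hts.imp fun _ _ h => h.flip hE)⟩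

theorem Twin.height_cases (hS : IsEqEMatching E S) {a a' : RTerm F} (h : Twin E S a a') :
    (height a = 0 ∧ height a' = 0 ∧ EqE E a a') ∨
      (0 < height a ∧ 0 < height a' ∧ ∃ b b', S b b' ∧ EqE E a b ∧ EqE E a' b') := by
  rcases h with ⟨h0, ha⟩ | ⟨b, b', hb, hab, hab'⟩
  · exact .inl ⟨h0, EqE.height_eq hE ha ▸ h0, ha⟩
  · have := hS.height_pos _ _ hb
    exact .inr ⟨EqE.height_eq hE hab ▸ this.1, EqE.height_eq hE hab' ▸ this.2, b, b', hb, hab, hab'⟩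

theorem Twin.eqE_of_height_zero (hS : IsEqEMatching E S) {a a' : RTerm F} (h : Twin E S a a')
    (h0 : height a = 0) : EqE E a a' := by
  rcases h.height_cases hE hS with ⟨-, -, h⟩ | ⟨h0', -⟩
  · exact h
  · omega

theorem Twin.eqE_iff (hS : IsEqEMatching E S) {a a' b b' : RTerm F} (ha : Twin E S a a')
    (hb : Twin E S b b') : EqE E a b ↔ EqE E a' b' := by
  have hne {x y : RTerm F} (hxy : height x ≠ height y) : ¬ EqE E x y :=
    fun h => hxy (EqE.height_eq hE h)
  rcases ha.height_cases hE hS with ⟨ha0, ha0', haa⟩ | ⟨ha0, ha0', c, c', hc, hac, hac'⟩ <;>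
    rcases hb.height_cases hE hS with ⟨hb0, hb0', hbb⟩ | ⟨hb0, hb0', d, d', hd, hbd, hbd'⟩
  · exact ⟨fun h => haa.symm.trans (h.trans hbb), fun h => haa.trans (h.trans hbb.symm)⟩
  · exact iff_of_false (hne (by omega)) (hne (by omega))
  · exact iff_of_false (hne (by omega)) (hne (by omega))
  · calc EqE E a b ↔ EqE E c d :=
          ⟨fun h => hac.symm.trans (h.trans hbd), fun h => hac.trans (h.trans hbd.symm)⟩
      _ ↔ EqE E c' d' := hS.eqE_iff _ _ _ _ hc hd
      _ ↔ EqE E a' b' :=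
          ⟨fun h => hac'.trans (h.trans hbd'.symm), fun h => hac'.symm.trans (h.trans hbd')⟩

theorem Twins.eqE_of_twins (hS : IsEqEMatching E S) {v v' v'' : RTerm F} (h : Twins E S v v')
    (h' : Twins E S v v'') : EqE E v' v'' := by
  obtain ⟨f, ts, ts', rfl, rfl, hts⟩ := h
  obtain ⟨_, _, ts'', ⟨⟩, rfl, hts'⟩ := h'
  refine EqE.node_of_forall₂ f ?_
  induction hts generalizing ts'' with
  | nil => cases hts'; exact .nil
  | cons hab _ ih =>
    cases hts' with
    | cons hac hts' => exact .cons ((Twin.eqE_iff hE hS hab hac).1 (.refl _)) (ih _ hts')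

theorem Twins.exists_of_rew_root_node (hS : IsEqEMatching E S) {g g' : F}
    {ps qs : List (Pat F)} (hlr : (Pat.node g ps, Pat.node g' qs) ∈ E ∨
      (Pat.node g' qs, Pat.node g ps) ∈ E)
    (hl : (Pat.node g ps).height = 1) (hr : (Pat.node g' qs).height = 1)
    (hv : ∀ x, (Pat.node g ps).HasVar x ↔ (Pat.node g' qs).HasVar x)
    (σ : ℕ → RTerm F) {u' : RTerm F} (hu : Twins E S ((Pat.node g ps).subst σ) u') :
    ∃ w', Twins E S ((Pat.node g' qs).subst σ) w' ∧ EqE E u' w' := by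
  obtain ⟨_, _, ts', hu, rfl, hts⟩ := hu
  rw [Pat.subst_node, node.injEq] at hu
  obtain ⟨rfl, rfl⟩ := hu
  rw [List.forall₂_map_left_iff] at hts
  -- the root step is replayed on the twins, instantiating each variable by a twin of its value
  have hex : ∀ x, ∃ a', Pat.var x ∈ ps → Twin E S (σ x) a' := fun x => by
    by_cases hx : Pat.var x ∈ ps
    · obtain ⟨a', -, ha'⟩ := hts.exists_of_mem_left hx
      exact ⟨a', fun _ => by simpa [Pat.subst_var] using ha'⟩
    · exact ⟨σ x, fun h => absurd h hx⟩
  choose σ' hσ' using hex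
  refine ⟨(Pat.node g' qs).subst σ', ?_, ?_⟩
  · rw [Pat.subst_node, Pat.subst_node]
    refine ⟨g', _, _, rfl, rfl, ?_⟩
    rw [List.forall₂_map_left_iff, List.forall₂_map_right_iff, List.forall₂_same]
    intro q hq
    rcases Pat.eq_var_or_const_of_height_eq_zero (Pat.height_eq_zero_of_mem hr.le hq) with
      ⟨x, rfl⟩ | ⟨d, rfl⟩
    · have hx := (Pat.hasVar_node_iff hl.le).1 ((hv x).2 ((Pat.hasVar_node_iff hr.le).2 hq))
      simpa [Pat.subst_var] using hσ' x hx
    · simp only [Pat.subst_node, List.map_nil]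
      exact .inl ⟨by simp [height], .refl _⟩
  · refine EqE.trans ?_ (Relation.ReflTransGen.single ⟨_, _, hlr, σ', [], .refl _, .here _ _⟩)
    rw [Pat.subst_node]
    refine EqE.node_of_forall₂ g (List.forall₂_map_right_iff.2 (List.Forall₂.flip ?_))
    refine ((List.forall₂_and_left _ _).2 ⟨fun p hp => hp, hts⟩).imp fun p a' ⟨hp, hpa⟩ => ?_
    rcases Pat.eq_var_or_const_of_height_eq_zero (Pat.height_eq_zero_of_mem hl.le hp) with
      ⟨x, rfl⟩ | ⟨c, rfl⟩
    · change EqE E a' ((Pat.var x).subst σ')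
      rw [Pat.subst_var] at hpa ⊢
      exact (Twin.eqE_iff hE hS hpa (hσ' x hp)).1 (.refl _)
    · change EqE E a' ((Pat.node c []).subst σ')
      simp only [Pat.subst_node, List.map_nil] at hpa ⊢
      exact (Twin.eqE_of_height_zero hE hS hpa (by simp [height])).symm

theorem Twins.exists_of_rew (hS : IsEqEMatching E S) {u w u' : RTerm F} (h : Rew E u w)
    (hu : Twins E S u u') : ∃ w', Twins E S w w' ∧ EqE E u' w' := by
  obtain ⟨l, rr, hlr, σ, p, hsub, hrep⟩ := h
  cases p with
  | nil =>
    obtain rfl := hsub.nil_eq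
    obtain rfl := hrep.nil_eq
    have hflat : IsFlatEq ar (l, rr) := hlr.elim (hE _) fun h => (hE _ h).symm
    rcases hflat.shape with ⟨x, rfl, rfl⟩ | ⟨c, d, rfl, rfl⟩ | ⟨g, ps, g', qs, rfl, rfl, hl, hr⟩
    · exact ⟨u', hu, .refl _⟩
    · have hconst (e : F) : (Pat.node e []).subst σ = node e [] := by simp [Pat.subst_node]
      obtain ⟨_, _, ts', hc, rfl, hts⟩ := hu
      rw [hconst, node.injEq] at hc
      obtain ⟨rfl, rfl⟩ := hc
      obtain rfl := List.forall₂_nil_left_iff.1 hts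
      refine ⟨node d [], ⟨d, [], [], hconst d, rfl, .nil⟩, .single ?_⟩
      have hstep : Rew E ((Pat.node c []).subst σ) ((Pat.node d []).subst σ) :=
        ⟨_, _, hlr, σ, [], .refl _, .here _ _⟩
      rwa [hconst, hconst] at hstep
    · exact exists_of_rew_root_node hE hS hlr hl hr hflat.2.2.2.2 σ hu
  | cons k q =>
    obtain ⟨f, ts, ts', rfl, rfl, hts⟩ := hu
    obtain ⟨c, hc, hsubc⟩ := subAt_cons_iff.1 hsub
    cases hrep with
    | step hc' hrepc =>
      obtain rfl := Option.some.inj (hc.symm.trans hc')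
      have hcc : EqE E c _ := Relation.ReflTransGen.single ⟨l, rr, hlr, σ, q, hsubc, hrepc⟩
      exact ⟨_, ⟨f, _, ts', rfl, rfl, hts.set_left hc fun _ h => h.of_eqE_left hE hcc⟩, .refl _⟩

theorem Twins.exists_of_eqE (hS : IsEqEMatching E S) {u v u' : RTerm F} (h : EqE E u v)
    (hu : Twins E S u u') : ∃ v', Twins E S v v' ∧ EqE E u' v' := by
  induction h with
  | refl => exact ⟨u', hu, .refl _⟩
  | tail _ hwv ih =>
    obtain ⟨w', hw, huw⟩ := ih
    obtain ⟨v', hv, hwv'⟩ := hw.exists_of_rew hE hS hwv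
    exact ⟨v', hv, huw.trans hwv'⟩

theorem Twins.eqE (hS : IsEqEMatching E S) {u u' v v' : RTerm F} (hu : Twins E S u u')
    (hv : Twins E S v v') (h : EqE E u v) : EqE E u' v' := by
  obtain ⟨v'', hv'', hu'v''⟩ := hu.exists_of_eqE hE hS h
  exact hu'v''.trans (hv''.eqE_of_twins hE hS hv)

theorem Twins.eqE_iff (hS : IsEqEMatching E S) {u u' v v' : RTerm F} (hu : Twins E S u u')
    (hv : Twins E S v v') : EqE E u v ↔ EqE E u' v' :=
  ⟨hu.eqE hE hS hv, (hu.flip hE).eqE hE hS.flip (hv.flip hE)⟩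

end Twins

theorem satGC_of_forall_pairs {E : List (Pat F × Pat F)} {st : β → Q} {sy : β → F}
    {r r' : RTerm β} {c : GC Q} (hconj : c.IsConjAtoms) (hatoms : c.AtomsAre GAtom.IsEqNeq)
    (hpairs : ∀ p₁ p₂ w₁ w₂, p₁ ≠ p₂ → SubAt r' p₁ w₁ → SubAt r' p₂ w₂ →
      ∃ o₁ o₂ v₁ v₂, o₁ ≠ o₂ ∧ SubAt r o₁ v₁ ∧ SubAt r o₂ v₂ ∧
        st v₁.rootLabel = st w₁.rootLabel ∧ st v₂.rootLabel = st w₂.rootLabel ∧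
        (EqE E (w₁.map sy) (w₂.map sy) ↔ EqE E (v₁.map sy) (v₂.map sy)))
    (h : satGC E st sy r c) : satGC E st sy r' c := by
  induction c with
  | tt => trivial
  | ff => exact h
  | atom a =>
    cases a with
    | eq q q' =>
      intro p₁ p₂ w₁ w₂ hne h₁ h₂ hq hq'
      obtain ⟨o₁, o₂, v₁, v₂, hne', h₁', h₂', hst₁, hst₂, hiff⟩ := hpairs p₁ p₂ w₁ w₂ hne h₁ h₂
      exact hiff.2 (h o₁ o₂ v₁ v₂ hne' h₁' h₂' (hst₁.trans hq) (hst₂.trans hq'))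
    | neq q q' =>
      intro p₁ p₂ w₁ w₂ hne h₁ h₂ hq hq' heq
      obtain ⟨o₁, o₂, v₁, v₂, hne', h₁', h₂', hst₁, hst₂, hiff⟩ := hpairs p₁ p₂ w₁ w₂ hne h₁ h₂
      exact h o₁ o₂ v₁ v₂ hne' h₁' h₂' (hst₁.trans hq) (hst₂.trans hq') (hiff.1 heq)
    | cnt => exact hatoms.elim
    | cls => exact hatoms.elim
  | and c d ihc ihd => exact ⟨ihc hconj.1 hatoms.1 h.1, ihd hconj.2 hatoms.2 h.2⟩
  | or => exact hconj.elim
  | not => exact hconj.elim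

theorem Run.term_node (ρ : Rule F Q) (rs : List (Run F Q)) :
    Run.term (node ρ rs) = node ρ.sym (rs.map Run.term) :=
  map_node _ _ _

theorem Run.height_term (s : Run F Q) : height s.term = height s :=
  height_map _ _

theorem IsRun.sub {Δ : List (Rule F Q)} {E : List (Pat F × Pat F)} {t s : Run F Q}
    {p : List ℕ} (h : IsRun Δ E t) (hs : SubAt t p s) : IsRun Δ E s := by
  induction hs with
  | refl => exact h
  | step hu _ ih =>
    cases h with
    | node _ _ hkids _ _ => exact ih (hkids _ (List.mem_of_getElem? hu))

section Dom

variable {r : Run F Q} {m : ℕ}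

theorem height_le_of_mem_Dom {p : List ℕ} {s : Run F Q} (hp : p ∈ Dom r m)
    (hs : SubAt r p s) : height s ≤ m := by
  rcases hp with (⟨s', hs', -, he⟩ | ⟨_, _, _, s', rfl, -, hs', -, hlt, -⟩) |
    ⟨_, _, _, s', rfl, -, hs', h0, -, -⟩ <;> rw [hs.det hs'] <;> omega

theorem exists_lt_height_of_append_mem_Dom {p x : List ℕ} (hp : p ++ x ∈ Dom r m)
    (hx : x ≠ []) : ∃ s, SubAt r p s ∧ m < height s := by
  rcases hp with (⟨s', hs', -, rfl⟩ | ⟨p₀, k, s₀, -, he, hs₀, -, -, -, hgt⟩) |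
    ⟨p₀, k, s₀, -, he, hs₀, -, -, -, hgt⟩
  · obtain ⟨s, hs, hss'⟩ := hs'.of_append
    exact ⟨s, hs, hss'.height_lt hx⟩
  all_goals
    obtain ⟨y, rfl⟩ : p <+: p₀ := by
      rcases List.prefix_concat_iff.1 (he ▸ List.prefix_append p x) with h | h
      · exact absurd (by simpa [h] using he) hx
      · exact h
    obtain ⟨s, hs, -⟩ := hs₀.of_append
    exact ⟨s, hs, hgt.trans_le (hs₀.height_le_of_append hs)⟩

theorem eq_of_prefix_of_mem_Dom {p p' : List ℕ} (hp : p ∈ Dom r m) (hp' : p' ∈ Dom r m)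
    (h : p <+: p') : p = p' := by
  obtain ⟨x, rfl⟩ := h
  by_contra hne
  obtain ⟨s, hs, hlt⟩ := exists_lt_height_of_append_mem_Dom hp' (by rintro rfl; simp at hne)
  exact absurd (height_le_of_mem_Dom hp hs) (not_le.2 hlt)

theorem append_mem_Dom {p : List ℕ} {k : ℕ} {s c : Run F Q} (hs : SubAt r p s)
    (hc : SubAt r (p ++ [k]) c) (hm : 0 < m) (hgt : m < height s) (hle : height c ≤ m) :
    p ++ [k] ∈ Dom r m := by
  rcases Nat.eq_zero_or_pos (height c) with h0 | hpos
  · exact .inr ⟨p, k, s, c, rfl, hs, hc, h0, hm, hgt⟩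
  · rcases hle.lt_or_eq with hlt | rfl
    · exact .inl (.inr ⟨p, k, s, c, rfl, hs, hc, hpos, hlt, hgt⟩)
    · exact .inl (.inl ⟨c, hc, hpos, rfl⟩)

theorem nil_mem_Dom_or_lt_height (hm : 0 < m) (hle : m ≤ height r) :
    [] ∈ Dom r m ∨ m < height r := by
  rcases hle.lt_or_eq with hlt | rfl
  · exact .inr hlt
  · exact .inl (.inl (.inl ⟨r, .refl r, hm, rfl⟩))

end Dom

section Pumping

variable {E : List (Pat F × Pat F)} {r : Run F Q} {i j : ℕ} {I : List ℕ → List ℕ}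

abbrev Pump (r : Run F Q) (i : ℕ) (I : List ℕ → List ℕ) :
    List ℕ → Run F Q → Run F Q → Prop :=
  MultiRepl (Dom r i) (fun p s => SubAt r (I p) s)

namespace PumpInj

variable (hI : PumpInj E r i j I)
include hI

theorem mapsTo_Dom : Set.MapsTo I (Dom r i) (Dom r j) := by
  rintro p ((hp | hp) | hp)
  exacts [.inl (.inl (hI.mapsH hp)), .inl (.inr (hI.mapsHc hp)), .inr (hI.mapsHr hp)]

theorem height_image_le {p : List ℕ} {s' : Run F Q} (hp : p ∈ Dom r i)
    (hs' : SubAt r (I p) s') : height s' ≤ j :=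
  height_le_of_mem_Dom (hI.mapsTo_Dom hp) hs'

theorem height_image_pos {p : List ℕ} {s s' : Run F Q} (hp : p ∈ Dom r i) (hs : SubAt r p s)
    (h0 : 0 < height s) (hs' : SubAt r (I p) s') : 0 < height s' := by
  rcases hp with (hp | hp) | ⟨_, _, _, s₀, rfl, -, hs₀, h, -, -⟩
  · obtain ⟨z, hz, hz0, -⟩ := hI.mapsH hp
    rwa [hs'.det hz]
  · obtain ⟨_, _, _, z, -, -, hz, hz0, -, -⟩ := hI.mapsHc hp
    rwa [hs'.det hz]
  · rw [hs.det hs₀] at h0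
    omega

theorem height_image_eq {p : List ℕ} {s s' : Run F Q} (hs : SubAt r p s) (hi : 0 < i)
    (he : height s = i) (hs' : SubAt r (I p) s') : height s' = j := by
  obtain ⟨z, hz, -, hzj⟩ := hI.mapsH ⟨s, hs, he ▸ hi, he⟩
  rwa [hs'.det hz]

theorem image_eq_self {p : List ℕ} {s : Run F Q} (hp : p ∈ Dom r i) (hs : SubAt r p s)
    (h0 : height s = 0) : I p = p := by
  rcases hp with (⟨s', hs', hpos, -⟩ | ⟨_, _, _, s', rfl, -, hs', hpos, -, -⟩) | hp
  · rw [hs.det hs'] at h0; omega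
  · rw [hs.det hs'] at h0; omega
  · exact hI.idRing _ hp

theorem eq_of_image_append_eq {d₁ d₂ suf₁ suf₂ : List ℕ} (hd₁ : d₁ ∈ Dom r i)
    (hd₂ : d₂ ∈ Dom r i) (h : I d₁ ++ suf₁ = I d₂ ++ suf₂) : d₁ = d₂ ∧ suf₁ = suf₂ := by
  have hI₁ := hI.mapsTo_Dom hd₁
  have hI₂ := hI.mapsTo_Dom hd₂
  have himg : I d₁ = I d₂ := by
    rcases List.prefix_or_prefix_of_prefix (List.prefix_append (I d₁) suf₁)
      (h ▸ List.prefix_append (I d₂) suf₂) with h' | h'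
    · exact eq_of_prefix_of_mem_Dom hI₁ hI₂ h'
    · exact (eq_of_prefix_of_mem_Dom hI₂ hI₁ h').symm
  rw [himg, List.append_cancel_left_eq] at h
  exact ⟨hI.inj hd₁ hd₂ himg, h⟩

end PumpInj

/-- The subrun `c` of `r` at `p` becomes `c'` in the pumping: either `p` itself is replaced, or `c`
is higher than `i` and the replacements happen strictly below `p`. -/
def PumpedAt (r : Run F Q) (i : ℕ) (I : List ℕ → List ℕ) (p : List ℕ) (c c' : Run F Q) : Prop :=
  SubAt r p c ∧ ((p ∈ Dom r i ∧ SubAt r (I p) c') ∨ (i < height c ∧ Pump r i I p c c'))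

def Pumped (r : Run F Q) (i : ℕ) (I : List ℕ → List ℕ) (c c' : Run F Q) : Prop :=
  ∃ p, PumpedAt r i I p c c'

theorem Pump.eq_node {p : List ℕ} {s s' : Run F Q} (hs : SubAt r p s) (hp : Pump r i I p s s')
    (hi : 0 < i) (hgt : i < height s) :
    ∃ ρ ts ts', s = node ρ ts ∧ s' = node ρ ts' ∧ ts.length = ts'.length ∧
      ∀ (k : ℕ) c c', ts[k]? = some c → ts'[k]? = some c' → PumpedAt r i I (p ++ [k]) c c' := by
  cases hp with
  | here hD _ => exact absurd (height_le_of_mem_Dom hD hs) (not_le.2 hgt)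
  | @node _ ρ ts ts' _ hlen hch =>
    refine ⟨ρ, ts, ts', rfl, rfl, hlen, fun k c c' hc hc' => ?_⟩
    have hsc : SubAt r (p ++ [k]) c := hs.append (.step hc (.refl c))
    refine ⟨hsc, ?_⟩
    by_cases hD : p ++ [k] ∈ Dom r i
    · cases hch k c c' hc hc' with
      | here _ h => exact .inl ⟨hD, h⟩
      | node hD' _ _ => exact absurd hD hD'
    · exact .inr ⟨not_le.1 fun hle => hD (append_mem_Dom hs hsc hi hgt hle), hch k c c' hc hc'⟩

theorem Pump.rootLabel_eq {p : List ℕ} {s s' : Run F Q} (hp : Pump r i I p s s')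
    (hD : p ∉ Dom r i) : s'.rootLabel = s.rootLabel := by
  cases hp with
  | here h _ => exact absurd h hD
  | node => rfl

theorem Pump.height_bounds (hI : PumpInj E r i j I) (hij : j < i) {p : List ℕ} {s s' : Run F Q}
    (hs : SubAt r p s) (hp : Pump r i I p s s') (hgt : i < height s) :
    j < height s' ∧ height s' < height s := by
  induction hn : height s using Nat.strong_induction_on generalizing p s s' with
  | _ n ih =>
  obtain ⟨ρ, ts, ts', rfl, rfl, hlen, hch⟩ := hp.eq_node hs (by omega) hgt
  have hchild : ∀ (k : ℕ) c c', ts[k]? = some c → ts'[k]? = some c' →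
      height c' + 2 ≤ n ∧ (i ≤ height c → j ≤ height c') := by
    intro k c c' hc hc'
    have hcs := height_lt_height_of_mem (f := ρ) (List.mem_of_getElem? hc)
    rcases hch k c c' hc hc' with ⟨hsc, ⟨hD, hIc⟩ | ⟨hic, hpc⟩⟩
    · have hci := height_le_of_mem_Dom hD hsc
      have := hI.height_image_le hD hIc
      exact ⟨by omega, fun hic => (hI.height_image_eq hsc (by omega) (by omega) hIc).ge⟩
    · have := ih _ (hn ▸ hcs) hsc hpc hic rfl
      exact ⟨by omega, fun _ => this.1.le⟩
  constructor
  · obtain ⟨u, hu, hiu⟩ := lt_height_node_iff.1 hgt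
    obtain ⟨k, hk⟩ := List.getElem?_of_mem hu
    obtain ⟨u', hk'⟩ := List.exists_getElem?_of_length_eq hlen hk
    exact lt_height_node_iff.2 ⟨u', List.mem_of_getElem? hk', (hchild k u u' hk hk').2 hiu⟩
  · have : height (node ρ ts') ≤ (n - 2) + 1 := height_node_le_succ_iff.2 fun u' hu' => by
      obtain ⟨k, hk'⟩ := List.getElem?_of_mem hu'
      obtain ⟨u, hk⟩ := List.exists_getElem?_of_length_eq hlen.symm hk'
      have := (hchild k u u' hk hk').1
      omega
    omega

theorem PumpedAt.state_eq {p : List ℕ} {c c' : Run F Q} (hI : PumpInj E r i j I)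
    (h : PumpedAt r i I p c c') : c'.state = c.state := by
  rcases h with ⟨hc, ⟨hD, hIc⟩ | ⟨hgt, hp⟩⟩
  · exact (hI.stPres p hD c c' hc hIc).symm
  · exact congrArg Rule.res (hp.rootLabel_eq fun hD => (height_le_of_mem_Dom hD hc).not_gt hgt)

theorem PumpedAt.eq_of_height_eq_zero {p : List ℕ} {c c' : Run F Q} (hI : PumpInj E r i j I)
    (h : PumpedAt r i I p c c') (h0 : height c = 0) : c' = c := by
  rcases h with ⟨hc, ⟨hD, hIc⟩ | ⟨hgt, -⟩⟩
  · rw [hI.image_eq_self hD hc h0] at hIc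
    exact hIc.det hc
  · omega

theorem PumpedAt.height_pos {p : List ℕ} {c c' : Run F Q} (hI : PumpInj E r i j I) (hij : j < i)
    (h : PumpedAt r i I p c c') (h0 : 0 < height c) : 0 < height c' := by
  rcases h with ⟨hc, ⟨hD, hIc⟩ | ⟨hgt, hp⟩⟩
  · exact hI.height_image_pos hD hc h0 hIc
  · exact (Nat.zero_le j).trans_lt (hp.height_bounds hI hij hc hgt).1

theorem Run.not_eqE_of_height_ne {ar : F → ℕ} (hE : ∀ e ∈ E, IsFlatEq ar e) {x y : Run F Q}
    (h : height x ≠ height y) : ¬ EqE E x.term y.term := fun hxy =>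
  h (by simpa only [Run.height_term] using EqE.height_eq hE hxy)

def pumpedTerms (r : Run F Q) (i : ℕ) (I : List ℕ → List ℕ) (n : ℕ) (a a' : RTerm F) : Prop :=
  ∃ c c', Pumped r i I c c' ∧ 0 < height c ∧ height c < n ∧ a = c.term ∧ a' = c'.term

theorem Pump.twins (hI : PumpInj E r i j I) (hij : j < i) {n : ℕ} {p : List ℕ}
    {s s' : Run F Q} (hs : SubAt r p s) (hp : Pump r i I p s s') (hgt : i < height s)
    (hn : height s ≤ n) : Twins E (pumpedTerms r i I n) s.term s'.term := by
  obtain ⟨ρ, ts, ts', rfl, rfl, hlen, hch⟩ := hp.eq_node hs (by omega) hgt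
  refine ⟨ρ.sym, _, _, Run.term_node _ _, Run.term_node _ _, ?_⟩
  rw [List.forall₂_map_left_iff, List.forall₂_map_right_iff]
  refine List.forall₂_of_getElem? hlen fun k c c' hc hc' => ?_
  have hck := hch k c c' hc hc'
  rcases Nat.eq_zero_or_pos (height c) with h0 | hpos
  · rw [hck.eq_of_height_eq_zero hI h0]
    exact .inl ⟨by rwa [Run.height_term], .refl _⟩
  · have hcn := (height_lt_height_of_mem (f := ρ) (List.mem_of_getElem? hc)).trans_le hn
    exact .inr ⟨_, _, ⟨c, c', ⟨_, hck⟩, hpos, hcn, rfl, rfl⟩, .refl _, .refl _⟩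

theorem Pumped.eqE_iff {ar : F → ℕ} (hE : ∀ e ∈ E, IsFlatEq ar e) (hI : PumpInj E r i j I)
    (hij : j < i) {c₁ c₁' c₂ c₂' : Run F Q} (h₁ : Pumped r i I c₁ c₁')
    (h₂ : Pumped r i I c₂ c₂') : EqE E c₁.term c₂.term ↔ EqE E c₁'.term c₂'.term := by
  suffices ∀ n c₁ c₁' c₂ c₂', Pumped r i I c₁ c₁' → Pumped r i I c₂ c₂' →
      height c₁ < n → height c₂ < n → (EqE E c₁.term c₂.term ↔ EqE E c₁'.term c₂'.term) from
    this _ _ _ _ _ h₁ h₂ (Nat.lt_succ_of_le (le_max_left _ _))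
      (Nat.lt_succ_of_le (le_max_right _ _))
  intro n
  induction n with
  | zero => intros; omega
  | succ n ih =>
  rintro c₁ c₁' c₂ c₂' ⟨p₁, hc₁, h₁⟩ ⟨p₂, hc₂, h₂⟩ hn₁ hn₂
  have hS : IsEqEMatching E (pumpedTerms r i I n) := by
    refine ⟨?_, ?_⟩
    · rintro _ _ ⟨c, c', ⟨p, hp⟩, hpos, -, rfl, rfl⟩
      simp only [Run.height_term]
      exact ⟨hpos, hp.height_pos hI hij hpos⟩
    · rintro _ _ _ _ ⟨c, c', hc, -, hcn, rfl, rfl⟩ ⟨d, d', hd, -, hdn, rfl, rfl⟩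
      exact ih c c' d d' hc hd hcn hdn
  rcases h₁ with ⟨hD₁, hI₁⟩ | ⟨hgt₁, hp₁⟩ <;> rcases h₂ with ⟨hD₂, hI₂⟩ | ⟨hgt₂, hp₂⟩
  · exact hI.eqPres _ _ hD₁ hD₂ _ _ _ _ hc₁ hc₂ hI₁ hI₂
  · have := height_le_of_mem_Dom hD₁ hc₁
    have := hI.height_image_le hD₁ hI₁
    have := (hp₂.height_bounds hI hij hc₂ hgt₂).1
    exact iff_of_false (Run.not_eqE_of_height_ne hE (by omega))
      (Run.not_eqE_of_height_ne hE (by omega))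
  · have := height_le_of_mem_Dom hD₂ hc₂
    have := hI.height_image_le hD₂ hI₂
    have := (hp₁.height_bounds hI hij hc₁ hgt₁).1
    exact iff_of_false (Run.not_eqE_of_height_ne hE (by omega))
      (Run.not_eqE_of_height_ne hE (by omega))
  · exact (hp₁.twins hI hij hc₁ hgt₁ (by omega)).eqE_iff hE hS
      (hp₂.twins hI hij hc₂ hgt₂ (by omega))

theorem Pump.isRun {ar : F → ℕ} (hE : ∀ e ∈ E, IsFlatEq ar e) (hI : PumpInj E r i j I)
    (hij : j < i) {Δ : List (Rule F Q)} (hrun : IsRun Δ E r) {p : List ℕ} {s s' : Run F Q}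
    (hs : SubAt r p s) (hp : Pump r i I p s s') (hgt : i < height s) : IsRun Δ E s' := by
  induction hn : height s using Nat.strong_induction_on generalizing p s s' with
  | _ n ih =>
  obtain ⟨ρ, ts, ts', rfl, rfl, hlen, hch⟩ := hp.eq_node hs (by omega) hgt
  have hpair : ∀ (k : ℕ) c', ts'[k]? = some c' →
      ∃ c, ts[k]? = some c ∧ PumpedAt r i I (p ++ [k]) c c' := fun k c' hc' => by
    obtain ⟨c, hc⟩ := List.exists_getElem?_of_length_eq hlen.symm hc'
    exact ⟨c, hc, hch k c c' hc hc'⟩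
  cases hrun.sub hs with
  | node hρ hargs _ hbcE hbcN =>
  refine .node hρ (hargs.trans (List.ext_getElem? fun k => ?_)) (fun c' hc' => ?_) ?_ ?_
  · simp only [List.getElem?_map]
    cases hc' : ts'[k]? with
    | none =>
      rw [List.getElem?_eq_none_iff] at hc'
      rw [List.getElem?_eq_none_iff.2 (by omega)]
    | some c' =>
      obtain ⟨c, hc, hcc⟩ := hpair k c' hc'
      rw [hc, Option.map_some, Option.map_some, hcc.state_eq hI]
  · obtain ⟨k, hk'⟩ := List.getElem?_of_mem hc'
    obtain ⟨c, hc, hsc, ⟨-, hIc⟩ | ⟨hic, hpc⟩⟩ := hpair k c' hk'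
    · exact hrun.sub hIc
    · exact ih _ (hn ▸ height_lt_height_of_mem (List.mem_of_getElem? hc)) hsc hpc hic rfl
  · intro a b ra' rb' hab ha' hb'
    obtain ⟨ra, ha, hra⟩ := hpair _ _ ha'
    obtain ⟨rb, hb, hrb⟩ := hpair _ _ hb'
    exact (Pumped.eqE_iff hE hI hij ⟨_, hra⟩ ⟨_, hrb⟩).1 (hbcE a b ra rb hab ha hb)
  · intro a b ra' rb' hab ha' hb' heq
    obtain ⟨ra, ha, hra⟩ := hpair _ _ ha'
    obtain ⟨rb, hb, hrb⟩ := hpair _ _ hb'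
    exact hbcN a b ra rb hab ha hb ((Pumped.eqE_iff hE hI hij ⟨_, hra⟩ ⟨_, hrb⟩).2 heq)

theorem PumpInj.height_le_of_copy (hI : PumpInj E r i j I) {d suf : List ℕ} {w : Run F Q}
    (hd : d ∈ Dom r i) (hw : SubAt r (I d ++ suf) w) : height w ≤ j := by
  obtain ⟨z, hz, -⟩ := hw.of_append
  exact (hw.height_le_of_append hz).trans (hI.height_image_le hd hz)

/-- The subrun `w` at `q` in the pumped run stems from the subrun `v` at `o` in `r`: it is a copy
of `v` taken below some `I d`, or the pumping of `v`. -/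
def Origin (r : Run F Q) (i : ℕ) (I : List ℕ → List ℕ) (q : List ℕ) (w : Run F Q) (o : List ℕ)
    (v : Run F Q) : Prop :=
  SubAt r o v ∧ ((∃ d suf, d ∈ Dom r i ∧ q = d ++ suf ∧ o = I d ++ suf ∧ v = w) ∨
    (o = q ∧ i < height v ∧ Pump r i I q v w))

theorem Pump.exists_origin (hi : 0 < i) {p : List ℕ} {s s' : Run F Q} (hs : SubAt r p s)
    (hp : Pump r i I p s s') (hinv : p ∈ Dom r i ∨ i < height s) {q : List ℕ} {w : Run F Q}
    (hw : SubAt s' q w) : ∃ o v, Origin r i I (p ++ q) w o v := by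
  have hcopy : ∀ {p q : List ℕ} {s' w : Run F Q}, p ∈ Dom r i → SubAt r (I p) s' →
      SubAt s' q w → ∃ o v, Origin r i I (p ++ q) w o v :=
    fun hD hIp hw => ⟨_, _, hIp.append hw, .inl ⟨_, _, hD, rfl, rfl, rfl⟩⟩
  rcases hinv with hD | hgt
  · cases hp with
    | here _ hIp => exact hcopy hD hIp hw
    | node hD' _ _ => exact absurd hD hD'
  induction q generalizing p s s' with
  | nil =>
    obtain rfl := hw.nil_eq
    exact ⟨p, s, by simpa using hs, .inr ⟨by simp, hgt, by simpa using hp⟩⟩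
  | cons k q ih =>
    obtain ⟨ρ, ts, ts', rfl, rfl, hlen, hch⟩ := hp.eq_node hs hi hgt
    obtain ⟨c', hc', hw⟩ := subAt_cons_iff.1 hw
    obtain ⟨c, hc⟩ := List.exists_getElem?_of_length_eq hlen.symm hc'
    have hpq : p ++ k :: q = p ++ [k] ++ q := by simp
    rw [hpq]
    obtain ⟨hsc, ⟨hD, hIc⟩ | ⟨hic, hpc⟩⟩ := hch k c c' hc hc'
    · exact hcopy hD hIc hw
    · exact ih hsc hpc hw hic

namespace Origin

variable {q q₁ q₂ o o₁ o₂ : List ℕ} {w w₁ w₂ v v₁ v₂ : Run F Q}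

theorem state_eq (h : Origin r i I q w o v) : v.state = w.state := by
  rcases h with ⟨hv, ⟨-, -, -, -, -, rfl⟩ | ⟨rfl, hgt, hp⟩⟩
  · rfl
  · exact congrArg Rule.res
      (hp.rootLabel_eq fun hD => (height_le_of_mem_Dom hD hv).not_gt hgt).symm

theorem isRun {ar : F → ℕ} (hE : ∀ e ∈ E, IsFlatEq ar e) (hI : PumpInj E r i j I) (hij : j < i)
    {Δ : List (Rule F Q)} (hrun : IsRun Δ E r) (h : Origin r i I q w o v) : IsRun Δ E w := by
  rcases h with ⟨hv, ⟨-, -, -, -, -, rfl⟩ | ⟨rfl, hgt, hp⟩⟩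
  · exact hrun.sub hv
  · exact hp.isRun hE hI hij hrun hv hgt

theorem ne (hI : PumpInj E r i j I) (hij : j < i) (h₁ : Origin r i I q₁ w₁ o₁ v₁)
    (h₂ : Origin r i I q₂ w₂ o₂ v₂) (hq : q₁ ≠ q₂) : o₁ ≠ o₂ := by
  rintro rfl
  obtain rfl := h₁.1.det h₂.1
  rcases h₁ with ⟨hv₁, ⟨d₁, suf₁, hd₁, rfl, rfl, rfl⟩ | ⟨rfl, hgt₁, -⟩⟩ <;>
    rcases h₂ with ⟨-, ⟨d₂, suf₂, hd₂, rfl, heq, rfl⟩ | ⟨rfl, hgt₂, -⟩⟩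
  · obtain ⟨rfl, rfl⟩ := hI.eq_of_image_append_eq hd₁ hd₂ heq
    exact hq rfl
  · have := hI.height_le_of_copy hd₁ hv₁
    omega
  · have := hI.height_le_of_copy hd₂ (heq ▸ hv₁)
    omega
  · exact hq rfl

theorem eqE_iff {ar : F → ℕ} (hE : ∀ e ∈ E, IsFlatEq ar e) (hI : PumpInj E r i j I)
    (hij : j < i) (h₁ : Origin r i I q₁ w₁ o₁ v₁) (h₂ : Origin r i I q₂ w₂ o₂ v₂) :
    EqE E w₁.term w₂.term ↔ EqE E v₁.term v₂.term := by
  rcases h₁ with ⟨hv₁, ⟨d₁, suf₁, hd₁, -, rfl, rfl⟩ | ⟨rfl, hgt₁, hp₁⟩⟩ <;>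
    rcases h₂ with ⟨hv₂, ⟨d₂, suf₂, hd₂, -, rfl, rfl⟩ | ⟨rfl, hgt₂, hp₂⟩⟩
  · rfl
  · have := hI.height_le_of_copy hd₁ hv₁
    have := (hp₂.height_bounds hI hij hv₂ hgt₂).1
    exact iff_of_false (Run.not_eqE_of_height_ne hE (by omega))
      (Run.not_eqE_of_height_ne hE (by omega))
  · have := hI.height_le_of_copy hd₂ hv₂
    have := (hp₁.height_bounds hI hij hv₁ hgt₁).1
    exact iff_of_false (Run.not_eqE_of_height_ne hE (by omega))
      (Run.not_eqE_of_height_ne hE (by omega))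
  · exact (Pumped.eqE_iff hE hI hij ⟨_, hv₁, .inr ⟨hgt₁, hp₁⟩⟩ ⟨_, hv₂, .inr ⟨hgt₂, hp₂⟩⟩).symm

end Origin

end Pumping

theorem global_pumping_is_run_general {F Q : Type} (A : TABG F Q)
    (hwf : A.WF) (hconj : A.gc.IsConjAtoms) (hatoms : A.gc.AtomsAre GAtom.IsEqNeq)
    (r : Run F Q) (hrun : IsRun A.rules A.eqs r)
    (hsat : satGC A.eqs Rule.res Rule.sym r A.gc)
    (i j : ℕ) (hij : j < i) (hi : i ≤ RTerm.height r)
    (I : List ℕ → List ℕ) (r' : Run F Q)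
    (hpump : IsGlobalPumpingWith A.eqs r i j I r') :
    (IsRun A.rules A.eqs r' ∧ satGC A.eqs Rule.res Rule.sym r' A.gc) ∧
    RTerm.height r' < RTerm.height r := by
  obtain ⟨hI, hpump⟩ := hpump
  have hE := hwf.1
  have horigin : ∀ q w, SubAt r' q w → ∃ o v, Origin r i I q w o v := fun q w hw => by
    simpa using Pump.exists_origin (by omega) (.refl r) hpump
      (nil_mem_Dom_or_lt_height (by omega) hi) hw
  obtain ⟨o, v, hroot⟩ := horigin [] r' (.refl r')
  refine ⟨⟨hroot.isRun hE hI hij hrun, satGC_of_forall_pairs hconj hatoms ?_ hsat⟩, ?_⟩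
  · intro q₁ q₂ w₁ w₂ hq h₁ h₂
    obtain ⟨o₁, v₁, ho₁⟩ := horigin q₁ w₁ h₁
    obtain ⟨o₂, v₂, ho₂⟩ := horigin q₂ w₂ h₂
    exact ⟨o₁, o₂, v₁, v₂, ho₁.ne hI hij ho₂ hq, ho₁.1, ho₂.1, ho₁.state_eq, ho₂.state_eq,
      ho₁.eqE_iff hE hI hij ho₂⟩
  · rcases hroot with ⟨hv, ⟨d, suf, hd, -, rfl, rfl⟩ | ⟨rfl, hgt, hp⟩⟩
    · have := hI.height_le_of_copy hd hv
      omega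
    · obtain rfl := hv.nil_eq
      exact (hp.height_bounds hI hij hv hgt).2

/-- The result of a global pumping on a run of a positive
conjunctive TABG is again a run of the automaton (it satisfies the brother and
global constraints), of strictly smaller height. -/
theorem global_pumping_is_run {F Q : Type} (A : TABG F Q)
    (hwf : A.WF) (hconj : A.gc.IsConjAtoms) (hatoms : A.gc.AtomsAre GAtom.IsEqNeq)
    (r : Run F Q) (hrun : IsRun A.rules A.eqs r)
    (hsat : satGC A.eqs Rule.res Rule.sym r A.gc)
    (i j : ℕ) (hj : 1 ≤ j) (hij : j < i) (hi : i ≤ RTerm.height r)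
    (I : List ℕ → List ℕ) (r' : Run F Q)
    (hpump : IsGlobalPumpingWith A.eqs r i j I r') :
    (IsRun A.rules A.eqs r' ∧ satGC A.eqs Rule.res Rule.sym r' A.gc) ∧
    RTerm.height r' < RTerm.height r :=
  global_pumping_is_run_general A hwf hconj hatoms r hrun hsat i j hij hi I r' hpump

end TreeAut
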